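/- arXiv:1107.5301 — 6 statements merged into one kernel-verified Lean document; each statement's English description precedes it below -/
import Mathlib

section
/- Let H ⊆ V(T_n) and let S(H) be the set of signatures (sets of levels occupied by the images) of all regular embeddings of T_d into H over all d ≥ 0, including the empty signature. Then |S(H)| ≥ 2^(w(H)). -/
/-!
Split `H` at the root into the parts `H₀ = cons false ⁻¹' H` and `H₁ = cons true ⁻¹' H`
below the two children, so that `w(H) = [[] ∈ H] + w(H₀)/2 + w(H₁)/2`. Prefixing a bit turns an
embedding into `H_b` into one into `H` whose signature is shifted up by one level. If moreover
`[] ∈ H`, embeddings into `H₀` and `H₁` with the same signature `σ` have the same level map,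
and grafting them under the root gives a signature `{0} ∪ (σ + 1)`. Thus `|S(H)| ≥ |S(H_b)|`
always and `|S(H)| ≥ |S(H₀)| + |S(H₁)|` when `[] ∈ H`, and induction on `n` together with
`√(ab) ≤ (a + b)/2` gives `|S(H)| ≥ 2^w(H)`.
-/

/-- Vertex set of the full binary tree `T_n` of depth `n-1`:
binary strings of length `< n`; the level of a vertex is its length. -/
def treeVerts (n : ℕ) : Set (List Bool) := {x | x.length < n}

/-- Weight of a set of vertices: `w(H) = Σ_{x ∈ H} 2^(-level x)`. -/
noncomputable def weight (H : Set (List Bool)) : ℝ :=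
  ∑' x : H, (2 : ℝ) ^ (-((x : List Bool).length : ℤ))

/-- `f` is a regular embedding of `T_d`: vertices at equal levels map to equal
levels, and the two children of each vertex map to descendants of distinct
children of the image (descendant = extension of the string). -/
def IsRegEmb (d : ℕ) (f : List Bool → List Bool) : Prop :=
  (∀ x y : List Bool, x.length < d → y.length < d → x.length = y.length →
      (f x).length = (f y).length) ∧
  (∀ x : List Bool, x.length + 1 < d → ∃ c : Bool,
      (f x ++ [c]) <+: f (x ++ [false]) ∧ (f x ++ [!c]) <+: f (x ++ [true]))

/-- `S(H)`: the set of signatures (sets of occupied levels) of all regular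
embeddings of some `T_d`, `d ≥ 0`, into `H`. -/
def sigs (H : Set (List Bool)) : Set (Set ℕ) :=
  {σ | ∃ (d : ℕ) (f : List Bool → List Bool), IsRegEmb d f ∧
      (∀ x : List Bool, x.length < d → f x ∈ H) ∧
      σ = {l : ℕ | ∃ x : List Bool, x.length < d ∧ (f x).length = l}}

open Set

theorem StrictMonoOn.eqOn_of_image_eq {α β : Type*} [LinearOrder α] [WellFoundedLT α]
    [Preorder β] {f g : α → β} {s : Set α} (hf : StrictMonoOn f s) (hg : StrictMonoOn g s)
    (h : f '' s = g '' s) : EqOn f g s := fun x hx =>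
  congrFun ((hf.domRestrict.range_inj hg.domRestrict).1 (by simpa only [range_domRestrict]))
    ⟨x, hx⟩

theorem Real.rpow_half_add_half_le {c x y a b : ℝ} (hc : 0 < c) (ha : c ^ x ≤ a)
    (hb : c ^ y ≤ b) : c ^ (x / 2 + y / 2) ≤ (a + b) / 2 := by
  have hsqrt {z p : ℝ} (hz : c ^ z ≤ p) : c ^ (z / 2) ≤ p ^ (1 / 2 : ℝ) := by
    rw [div_eq_mul_one_div z, rpow_mul hc.le]
    exact rpow_le_rpow (by positivity) hz (by norm_num)
  have ha0 : 0 ≤ a := (rpow_nonneg hc.le x).trans ha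
  have hb0 : 0 ≤ b := (rpow_nonneg hc.le y).trans hb
  calc c ^ (x / 2 + y / 2) = c ^ (x / 2) * c ^ (y / 2) := rpow_add hc _ _
    _ ≤ a ^ (1 / 2 : ℝ) * b ^ (1 / 2 : ℝ) :=
      mul_le_mul (hsqrt ha) (hsqrt hb) (by positivity) (by positivity)
    _ ≤ 1 / 2 * a + 1 / 2 * b :=
      geom_mean_le_arith_mean2_weighted (by norm_num) (by norm_num) ha0 hb0 (by norm_num)
    _ = (a + b) / 2 := by ring

theorem StrictMonoOn.ncard_image_Iio {β : Type*} [Preorder β] {f : ℕ → β} {d : ℕ}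
    (hf : StrictMonoOn f (Iio d)) : (f '' Iio d).ncard = d := by
  rw [hf.injOn.ncard_image, ncard_Iio_nat]

theorem zero_notMem_image_succ (σ : Set ℕ) : 0 ∉ (· + 1) '' σ := by simp

theorem image_succ_injective : Function.Injective (image (· + 1) : Set ℕ → Set ℕ) :=
  image_injective.2 (add_left_injective 1)

theorem insert_zero_image_succ_injective :
    Function.Injective fun σ : Set ℕ => insert 0 ((· + 1) '' σ) := fun σ τ h => by
  simpa only [insert_sdiff_self_of_notMem (zero_notMem_image_succ _), image_succ_injective.eq_iff]
    using congrArg (· \ {0}) h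

theorem weight_union {S T : Set (List Bool)} (hS : S.Finite) (hT : T.Finite) (h : Disjoint S T) :
    weight (S ∪ T) = weight S + weight T :=
  Summable.tsum_union_disjoint (f := fun y : List Bool => (2 : ℝ) ^ (-(y.length : ℤ))) h
    (hS.summable _) (hT.summable _)

theorem weight_image_cons (b : Bool) (S : Set (List Bool)) :
    weight (List.cons b '' S) = weight S / 2 := by
  rw [weight, tsum_image (fun y : List Bool => (2 : ℝ) ^ (-(y.length : ℤ)))
    List.cons_injective.injOn, weight, ← tsum_div_const]
  congr with x
  rw [List.length_cons, Nat.cast_succ, neg_add, zpow_add₀ two_ne_zero, zpow_neg_one, div_eq_mul_inv]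

open Classical in
theorem weight_inter_singleton_nil (H : Set (List Bool)) :
    weight (H ∩ {[]}) = if [] ∈ H then 1 else 0 := by
  split_ifs with h
  · rw [inter_singleton_of_mem h]
    simp [weight]
  · rw [inter_singleton_eq_empty.2 h]
    simp [weight]

open Classical in
theorem weight_eq_of_finite {H : Set (List Bool)} (hfin : H.Finite) :
    weight H = (if [] ∈ H then 1 else 0) + weight (List.cons false ⁻¹' H) / 2 +
      weight (List.cons true ⁻¹' H) / 2 := by
  have himage (b : Bool) := (hfin.preimage (List.cons_injective (a := b)).injOn).image (List.cons b)
  have hsplit : H = (H ∩ {[]}) ∪ (List.cons false '' (List.cons false ⁻¹' H) ∪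
      List.cons true '' (List.cons true ⁻¹' H)) := by
    ext (_ | ⟨_ | _, t⟩) <;> simp
  have hdisj : Disjoint (List.cons false '' (List.cons false ⁻¹' H))
      (List.cons true '' (List.cons true ⁻¹' H)) := by
    simp [disjoint_left]
  have hdisj' : Disjoint (H ∩ {[]}) (List.cons false '' (List.cons false ⁻¹' H) ∪
      List.cons true '' (List.cons true ⁻¹' H)) := by
    rw [disjoint_left]
    rintro _ ⟨-, rfl⟩
    simp
  conv_lhs => rw [hsplit]
  rw [weight_union (hfin.inter_of_left _) ((himage false).union (himage true)) hdisj',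
    weight_union (himage false) (himage true) hdisj, weight_image_cons, weight_image_cons,
    weight_inter_singleton_nil, add_assoc]

theorem treeVerts_finite (n : ℕ) : (treeVerts n).Finite := List.finite_length_lt Bool n

theorem preimage_cons_subset_treeVerts {n : ℕ} {H : Set (List Bool)} (hH : H ⊆ treeVerts (n + 1))
    (b : Bool) : List.cons b ⁻¹' H ⊆ treeVerts n :=
  fun _ ht => Nat.succ_lt_succ_iff.1 (hH ht)

/-- By the first condition of `IsRegEmb`, `f` maps all of level `k` of `T_d` to this level. -/
def imageLevel (f : List Bool → List Bool) (k : ℕ) : ℕ := (f (List.replicate k false)).length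

def graft (f₀ f₁ : List Bool → List Bool) : List Bool → List Bool
  | [] => []
  | b :: t => b :: cond b f₁ f₀ t

@[simp] theorem graft_nil (f₀ f₁ : List Bool → List Bool) : graft f₀ f₁ [] = [] := rfl

@[simp] theorem graft_cons (f₀ f₁ : List Bool → List Bool) (b : Bool) (t : List Bool) :
    graft f₀ f₁ (b :: t) = b :: cond b f₁ f₀ t := rfl

namespace IsRegEmb

variable {d : ℕ} {f : List Bool → List Bool}

theorem length_eq_imageLevel (h : IsRegEmb d f) {x : List Bool} (hx : x.length < d) :
    (f x).length = imageLevel f x.length :=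
  h.1 x _ hx (by simpa using hx) (by simp)

theorem strictMonoOn_imageLevel (h : IsRegEmb d f) : StrictMonoOn (imageLevel f) (Iio d) := by
  refine strictMonoOn_of_lt_succ ordConnected_Iio fun k _ _ hk => ?_
  rw [Order.succ_eq_add_one, mem_Iio] at hk
  rw [Order.succ_eq_add_one]
  obtain ⟨c, hc, -⟩ := h.2 (List.replicate k false) (by simpa using hk)
  rw [← List.replicate_succ'] at hc
  simpa [imageLevel] using hc.length_le

theorem signature_eq (h : IsRegEmb d f) :
    {l : ℕ | ∃ x : List Bool, x.length < d ∧ (f x).length = l} = imageLevel f '' Iio d := by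
  ext l
  constructor
  · rintro ⟨x, hx, rfl⟩
    exact ⟨x.length, hx, (h.length_eq_imageLevel hx).symm⟩
  · rintro ⟨k, hk, rfl⟩
    exact ⟨List.replicate k false, by simpa using hk, rfl⟩

theorem cons (h : IsRegEmb d f) (b : Bool) : IsRegEmb d (fun x => b :: f x) := by
  refine ⟨fun x y hx hy hxy => by simp [h.1 x y hx hy hxy], fun x hx => ?_⟩
  obtain ⟨c, hc₀, hc₁⟩ := h.2 x hx
  exact ⟨c, by simpa [List.cons_prefix_cons] using hc₀, by simpa [List.cons_prefix_cons] using hc₁⟩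

end IsRegEmb

theorem isRegEmb_graft {d : ℕ} {f₀ f₁ : List Bool → List Bool} (h₀ : IsRegEmb d f₀)
    (h₁ : IsRegEmb d f₁) (hlev : EqOn (imageLevel f₀) (imageLevel f₁) (Iio d)) :
    IsRegEmb (d + 1) (graft f₀ f₁) := by
  have hb (b : Bool) : IsRegEmb d (cond b f₁ f₀) := by cases b <;> assumption
  have hlen (b : Bool) {t : List Bool} (ht : t.length < d) :
      (graft f₀ f₁ (b :: t)).length = imageLevel f₀ t.length + 1 := by
    rw [graft_cons, List.length_cons, (hb b).length_eq_imageLevel ht]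
    cases b
    · rfl
    · rw [cond_true, ← hlev ht]
  refine ⟨fun x y hx hy hxy => ?_, fun x hx => ?_⟩
  · match x, y with
    | [], [] => rfl
    | b :: t, b' :: t' =>
      simp only [List.length_cons, add_lt_add_iff_right, add_left_inj] at hx hy hxy
      rw [hlen b hx, hlen b' hy, hxy]
  · match x with
    | [] => exact ⟨false, by simp, by simp⟩
    | b :: t =>
      obtain ⟨c, hc₀, hc₁⟩ := (hb b).2 t (by simpa using hx)
      exact ⟨c, by simpa [List.cons_prefix_cons] using hc₀,
        by simpa [List.cons_prefix_cons] using hc₁⟩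

theorem empty_mem_sigs (H : Set (List Bool)) : ∅ ∈ sigs H :=
  ⟨0, id, ⟨fun _ _ hx => absurd hx (Nat.not_lt_zero _), fun _ hx => absurd hx (by omega)⟩,
    fun _ hx => absurd hx (Nat.not_lt_zero _), by simp⟩

theorem sigs_finite {n : ℕ} {H : Set (List Bool)} (hH : H ⊆ treeVerts n) : (sigs H).Finite :=
  (finite_Iio n).finite_subsets.subset <| by
    rintro _ ⟨d, f, -, hmem, rfl⟩ _ ⟨x, hx, rfl⟩
    exact hH (hmem x hx)

theorem image_succ_mem_sigs {H : Set (List Bool)} {b : Bool} {σ : Set ℕ}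
    (hσ : σ ∈ sigs (List.cons b ⁻¹' H)) : (· + 1) '' σ ∈ sigs H := by
  obtain ⟨d, f, hf, hmem, rfl⟩ := hσ
  refine ⟨d, fun x => b :: f x, hf.cons b, hmem, ?_⟩
  ext l
  simp

theorem insert_zero_image_succ_mem_sigs {H : Set (List Bool)} {σ : Set ℕ} (hroot : [] ∈ H)
    (h₀ : σ ∈ sigs (List.cons false ⁻¹' H)) (h₁ : σ ∈ sigs (List.cons true ⁻¹' H)) :
    insert 0 ((· + 1) '' σ) ∈ sigs H := by
  obtain ⟨d, f₀, hf₀, hmem₀, rfl⟩ := h₀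
  obtain ⟨d₁, f₁, hf₁, hmem₁, hσ⟩ := h₁
  rw [hf₀.signature_eq, hf₁.signature_eq] at hσ
  obtain rfl : d = d₁ := by
    rw [← hf₀.strictMonoOn_imageLevel.ncard_image_Iio, hσ,
      hf₁.strictMonoOn_imageLevel.ncard_image_Iio]
  have hg := isRegEmb_graft hf₀ hf₁
    (hf₀.strictMonoOn_imageLevel.eqOn_of_image_eq hf₁.strictMonoOn_imageLevel hσ)
  refine ⟨d + 1, graft f₀ f₁, hg, ?_, ?_⟩
  · rintro (_ | ⟨_ | _, t⟩) hx
    · exact hroot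
    · exact hmem₀ t (by simpa using hx)
    · exact hmem₁ t (by simpa using hx)
  · rw [hg.signature_eq, hf₀.signature_eq]
    ext l
    constructor
    · rintro (rfl | ⟨_, ⟨k, hk, rfl⟩, rfl⟩)
      · exact ⟨0, by simp, rfl⟩
      · exact ⟨k + 1, by simpa using hk, rfl⟩
    · rintro ⟨_ | k, hk, rfl⟩
      · exact mem_insert _ _
      · exact mem_insert_of_mem _ ⟨_, ⟨k, by simpa using hk, rfl⟩, rfl⟩

section Counting

variable {H : Set (List Bool)}

theorem image_image_succ_sigs_subset (b : Bool) :
    image (· + 1) '' sigs (List.cons b ⁻¹' H) ⊆ sigs H :=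
  image_subset_iff.2 fun _ => image_succ_mem_sigs

theorem ncard_sigs_preimage_cons_le (hfin : (sigs H).Finite) (b : Bool) :
    (sigs (List.cons b ⁻¹' H)).ncard ≤ (sigs H).ncard := by
  rw [← ncard_image_of_injective _ image_succ_injective]
  exact ncard_le_ncard (image_image_succ_sigs_subset b) hfin

theorem sigs_preimage_cons_finite (hfin : (sigs H).Finite) (b : Bool) :
    (sigs (List.cons b ⁻¹' H)).Finite :=
  (hfin.subset (image_image_succ_sigs_subset b)).of_finite_image image_succ_injective.injOn

/-- Besides its shift, each signature common to both subtrees gives one through the root. -/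
theorem ncard_add_ncard_sigs_preimage_cons_le (hfin : (sigs H).Finite) (hroot : [] ∈ H) :
    (sigs (List.cons false ⁻¹' H)).ncard + (sigs (List.cons true ⁻¹' H)).ncard ≤
      (sigs H).ncard := by
  set A := sigs (List.cons false ⁻¹' H)
  set B := sigs (List.cons true ⁻¹' H)
  have hA := sigs_preimage_cons_finite hfin false
  have hB := sigs_preimage_cons_finite hfin true
  have hdisj : Disjoint (image (· + 1) '' (A ∪ B))
      ((fun σ : Set ℕ => insert 0 ((· + 1) '' σ)) '' (A ∩ B)) := by
    rw [disjoint_left]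
    rintro _ ⟨σ, -, rfl⟩ ⟨τ, -, hτ⟩
    exact zero_notMem_image_succ σ (hτ ▸ mem_insert 0 _)
  have hsub : image (· + 1) '' (A ∪ B) ∪
      (fun σ : Set ℕ => insert 0 ((· + 1) '' σ)) '' (A ∩ B) ⊆ sigs H := by
    rw [image_union]
    refine union_subset (union_subset (image_image_succ_sigs_subset false)
      (image_image_succ_sigs_subset true)) ?_
    rintro _ ⟨σ, ⟨h₀, h₁⟩, rfl⟩
    exact insert_zero_image_succ_mem_sigs hroot h₀ h₁
  rw [← ncard_union_add_ncard_inter A B hA hB,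
    ← ncard_image_of_injective (A ∪ B) image_succ_injective,
    ← ncard_image_of_injective (A ∩ B) insert_zero_image_succ_injective,
    ← ncard_union_eq hdisj ((hA.union hB).image _) ((hA.inter_of_left _).image _)]
  exact ncard_le_ncard hsub hfin

end Counting

/-- Signature-counting lemma: `|S(H)| ≥ 2^(w(H))`. -/
theorem stmt3 (n : ℕ) (H : Set (List Bool)) (hH : H ⊆ treeVerts n) :
    (2 : ℝ) ^ weight H ≤ ((sigs H).ncard : ℝ) := by
  induction n generalizing H with
  | zero =>
    obtain rfl : H = ∅ := eq_empty_of_subset_empty fun x hx => (Nat.not_lt_zero _ (hH hx)).elim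
    rw [weight, tsum_empty, Real.rpow_zero, Nat.one_le_cast, Nat.one_le_iff_ne_zero]
    exact ncard_ne_zero_of_mem (empty_mem_sigs ∅) (sigs_finite hH)
  | succ n ih =>
    have hfin := sigs_finite hH
    have hmean := Real.rpow_half_add_half_le two_pos
      (ih _ (preimage_cons_subset_treeVerts hH false))
      (ih _ (preimage_cons_subset_treeVerts hH true))
    rw [weight_eq_of_finite ((treeVerts_finite _).subset hH), add_assoc]
    split_ifs with hroot
    · have hsum := Nat.mono_cast (α := ℝ) (ncard_add_ncard_sigs_preimage_cons_le hfin hroot)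
      rw [Real.rpow_add two_pos, Real.rpow_one]
      push_cast at hsum
      linarith
    · have h₀ := Nat.mono_cast (α := ℝ) (ncard_sigs_preimage_cons_le hfin false)
      have h₁ := Nat.mono_cast (α := ℝ) (ncard_sigs_preimage_cons_le hfin true)
      rw [zero_add]
      linarith
end

section
/- For integers k, d, n ≥ 2 with n > 5·d·k·log₂ k, the inequality 2^(n/k) > Σ_{i=0}^{d−1} C(n,i) holds. -/
/-!
Comparing with the binomial expansion of `(1 + c/n)^n ≤ e^c` gives the standard bound
`∑_{i ≤ c} C(n,i) ≤ (e n / c)^c` with `c = d - 1`. Taking base-2 logarithms and writing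
`n = u c k`, it remains to see `log₂ (e u k) < u`, which holds as soon as `u > 5 log₂ k`.
-/

open Finset Real

lemma sum_range_choose_le_one_add_pow_div_pow {n c : ℕ} {x : ℝ} (hcn : c ≤ n)
    (hx0 : 0 < x) (hx1 : x ≤ 1) :
    ∑ i ∈ range (c + 1), (n.choose i : ℝ) ≤ (1 + x) ^ n / x ^ c := by
  rw [le_div_iff₀ (by positivity), sum_mul]
  calc ∑ i ∈ range (c + 1), (n.choose i : ℝ) * x ^ c
      ≤ ∑ i ∈ range (c + 1), (n.choose i : ℝ) * x ^ i := by
        refine sum_le_sum fun i hi => mul_le_mul_of_nonneg_left ?_ (by positivity)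
        exact pow_le_pow_of_le_one hx0.le hx1 (Nat.lt_succ_iff.mp (mem_range.mp hi))
    _ ≤ ∑ i ∈ range (n + 1), (n.choose i : ℝ) * x ^ i :=
        sum_le_sum_of_subset_of_nonneg (range_subset_range.mpr (by omega))
          (fun i _ _ => by positivity)
    _ = (1 + x) ^ n := by
        rw [add_comm 1 x, add_pow]
        simp only [one_pow, mul_one, mul_comm]

lemma sum_range_choose_le_exp_one_mul_div_pow {n c : ℕ} (hc : 0 < c) (hcn : c ≤ n) :
    ∑ i ∈ range (c + 1), (n.choose i : ℝ) ≤ (exp 1 * n / c) ^ c := by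
  have hn : (0 : ℝ) < n := by exact_mod_cast hc.trans_le hcn
  have hc' : (0 : ℝ) < c := by exact_mod_cast hc
  have hexp : (1 + (c : ℝ) / n) ^ n ≤ exp c := by
    simpa [sub_eq_add_neg, neg_div] using
      one_sub_div_pow_le_exp_neg (n := n) (t := -c) (by linarith)
  calc ∑ i ∈ range (c + 1), (n.choose i : ℝ)
      ≤ (1 + (c : ℝ) / n) ^ n / ((c : ℝ) / n) ^ c :=
        sum_range_choose_le_one_add_pow_div_pow hcn (by positivity)
          ((div_le_one hn).mpr (by exact_mod_cast hcn))
    _ ≤ exp c / ((c : ℝ) / n) ^ c := by gcongr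
    _ = (exp 1 * n / c) ^ c := by
        rw [← exp_one_pow, div_pow, div_pow, mul_pow]
        field_simp

lemma one_le_logb_two {k : ℝ} (hk : 2 ≤ k) : 1 ≤ logb 2 k := by
  rw [← logb_self_eq_one one_lt_two]
  exact logb_le_logb_of_le one_lt_two two_pos hk

lemma one_add_log_add_log_lt_mul_log_two {k u : ℝ} (hk : 2 ≤ k) (hu : 5 * logb 2 k < u) :
    1 + log u + log k < u * log 2 := by
  have hlog2 : 1 / 2 < log 2 := log_two_gt_d9.trans_le' (by norm_num)
  have hlogb := one_le_logb_two hk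
  have hlogk : log k = logb 2 k * log 2 := by
    rw [← log_div_log, div_mul_cancel₀ _ (log_pos one_lt_two).ne']
  have hlogu : log u ≤ log 5 + u / 5 - 1 := by
    have := log_le_sub_one_of_pos (x := u / 5) (by linarith)
    rw [log_div (by linarith) (by norm_num)] at this
    linarith
  -- `log 5 ≤ 4 log 2 - 1` is `e ≤ 16 / 5`
  have hlog5 : log 5 ≤ 4 * log 2 - 1 := by
    have he : 1 ≤ log (16 / 5) := by
      rw [le_log_iff_exp_le (by norm_num)]
      linarith [exp_one_lt_d9]
    rw [log_div (by norm_num) (by norm_num), show (16 : ℝ) = 2 ^ 4 by norm_num, log_pow] at he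
    push_cast at he
    linarith
  rw [hlogk]
  nlinarith [mul_le_mul_of_nonneg_right hlogb (by linarith : (0 : ℝ) ≤ 4 * log 2 - 1),
    mul_lt_mul_of_pos_right hu (by linarith : (0 : ℝ) < log 2 - 1 / 5)]

lemma exp_one_mul_div_rpow_lt_two_rpow {c k n : ℝ} (hc : 0 < c) (hk : 2 ≤ k)
    (h : 5 * c * k * logb 2 k < n) :
    (exp 1 * n / c) ^ c < (2 : ℝ) ^ (n / k) := by
  have hk0 : 0 < k := by linarith
  have hn : 0 < n := h.trans' (by have := one_le_logb_two hk; positivity)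
  set u := n / (c * k) with hu
  have hu0 : 0 < u := by positivity
  have hlog := one_add_log_add_log_lt_mul_log_two hk
    (show 5 * logb 2 k < u by rw [hu, lt_div_iff₀ (by positivity)]; linarith)
  have hnc : exp 1 * n / c = exp 1 * u * k := by rw [hu]; field_simp
  have hnk : n / k = c * u := by rw [hu]; field_simp
  rw [← log_lt_log_iff (by positivity) (by positivity), log_rpow (by positivity),
    log_rpow two_pos, hnc, hnk, log_mul (by positivity) hk0.ne', log_mul (by positivity) hu0.ne',
    log_exp]
  nlinarith [mul_lt_mul_of_pos_left hlog hc]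

theorem stmt5_general (k d n : ℕ) (hk : 2 ≤ k) (hd : 2 ≤ d)
    (h : 5 * (d : ℝ) * k * Real.logb 2 k < n) :
    ∑ i ∈ Finset.range d, (n.choose i : ℝ) < (2 : ℝ) ^ ((n : ℝ) / k) := by
  obtain ⟨c, rfl⟩ : ∃ c, d = c + 1 := ⟨d - 1, by omega⟩
  have hkR : (2 : ℝ) ≤ k := by exact_mod_cast hk
  have hklog : 1 ≤ (k : ℝ) * logb 2 k := by nlinarith [one_le_logb_two hkR]
  push_cast at h
  have h' : 5 * (c : ℝ) * k * logb 2 k < n := by nlinarith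
  have hcn : c ≤ n := by exact_mod_cast (show (c : ℝ) ≤ n by nlinarith)
  calc ∑ i ∈ range (c + 1), (n.choose i : ℝ)
      ≤ (exp 1 * n / c) ^ c := sum_range_choose_le_exp_one_mul_div_pow (by omega) hcn
    _ = (exp 1 * n / c) ^ (c : ℝ) := (rpow_natCast _ _).symm
    _ < (2 : ℝ) ^ ((n : ℝ) / k) :=
        exp_one_mul_div_rpow_lt_two_rpow (by exact_mod_cast (by omega : 0 < c)) hkR h'

/-- For integers `k, d, n ≥ 2` with `n > 5·d·k·log₂ k`,
`2^(n/k) > Σ_{i=0}^{d-1} C(n,i)`. -/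
theorem stmt5 (k d n : ℕ) (hk : 2 ≤ k) (hd : 2 ≤ d) (hn : 2 ≤ n)
    (h : 5 * (d : ℝ) * k * Real.logb 2 k < n) :
    ∑ i ∈ Finset.range d, (n.choose i : ℝ) < (2 : ℝ) ^ ((n : ℝ) / k) :=
  stmt5_general k d n hk hd h
end

section
/- For integers k, d, n ≥ 2 with n > 5·d·k·log₂ k, every coloring of the vertices of T_n with k colors admits a monochromatic replica of T_d, i.e., a regular embedding of T_d into one color class. -/
namespace TreeRamsey
variable {k : ℕ} (χ : List Bool → Fin k) (c : Fin k)

def EmbL (χ : List Bool → Fin k) (c : Fin k) : List Bool → List ℕ → Prop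
  | _, [] => True
  | p, l :: L => ∃ q : List Bool, p <+: q ∧ q.length = l ∧ χ q = c ∧
      EmbL χ c (q ++ [false]) L ∧ EmbL χ c (q ++ [true]) L

@[simp] lemma embL_nil {p : List Bool} : EmbL χ c p [] := trivial

variable {χ c} in
lemma EmbL.weaken {p p' : List Bool} {L : List ℕ} (hp : p' <+: p) (h : EmbL χ c p L) :
    EmbL χ c p' L := by
  cases L with
  | nil => trivial
  | cons l L => obtain ⟨q, h1, h2⟩ := h; exact ⟨q, hp.trans h1, h2⟩

lemma EmbL.take : ∀ (L : List ℕ) (j : ℕ) (p : List Bool),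
    EmbL χ c p L → EmbL χ c p (L.take j)
  | _, 0, _, _ => by simp
  | [], _, _, _ => by simp
  | l :: L, j + 1, p, h => by
    obtain ⟨q, h1, h2, h3, h4, h5⟩ := h
    exact ⟨q, h1, h2, h3, EmbL.take L j _ h4, EmbL.take L j _ h5⟩

open scoped Classical in
noncomputable def Sig (p : List Bool) (m : ℕ) : Finset (Finset ℕ) :=
  (Finset.Ico p.length (p.length + m)).powerset.filter
    (fun σ => EmbL χ c p (σ.sort (· ≤ ·)))

variable {χ c} in
lemma mem_Sig {p : List Bool} {m : ℕ} {σ : Finset ℕ} :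
    σ ∈ Sig χ c p m ↔ σ ⊆ Finset.Ico p.length (p.length + m) ∧
      EmbL χ c p (σ.sort (· ≤ ·)) := by
  classical simp [Sig, Finset.mem_filter, Finset.mem_powerset]

variable {χ c}

lemma Sig_child_subset {p : List Bool} {m : ℕ} (b : Bool) :
    Sig χ c (p ++ [b]) m ⊆ Sig χ c p (m + 1) := by
  intro σ hσ
  rw [mem_Sig] at hσ ⊢
  refine ⟨hσ.1.trans ?_, hσ.2.weaken (by simp)⟩
  apply Finset.Ico_subset_Ico <;> simp <;> omega

lemma notMem_of_mem_Sig_child {p : List Bool} {m : ℕ} {b : Bool} {σ : Finset ℕ}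
    (hσ : σ ∈ Sig χ c (p ++ [b]) m) : p.length ∉ σ := by
  intro hmem
  have := (mem_Sig.1 hσ).1 hmem
  simp [Finset.mem_Ico] at this

lemma Sig_insert {p : List Bool} {m : ℕ} {σ : Finset ℕ} (hc : χ p = c)
    (h0 : σ ∈ Sig χ c (p ++ [false]) m) (h1 : σ ∈ Sig χ c (p ++ [true]) m) :
    insert p.length σ ∈ Sig χ c p (m + 1) := by
  have hnm : p.length ∉ σ := notMem_of_mem_Sig_child h0
  rw [mem_Sig] at h0 h1 ⊢
  have hall : ∀ b ∈ σ, p.length ≤ b := by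
    intro b hb
    have := h0.1 hb
    simp [Finset.mem_Ico] at this
    omega
  constructor
  · intro a ha
    rcases Finset.mem_insert.1 ha with rfl | ha'
    · simp [Finset.mem_Ico]
    · have := h0.1 ha'
      simp [Finset.mem_Ico] at this ⊢
      omega
  · rw [Finset.sort_insert _ hall hnm]
    exact ⟨p, List.prefix_rfl, rfl, hc, h0.2, h1.2⟩

lemma card_step_other {p : List Bool} {m : ℕ} :
    (Sig χ c (p ++ [false]) m).card * (Sig χ c (p ++ [true]) m).card ≤
      (Sig χ c p (m + 1)).card ^ 2 := by
  rw [sq]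
  exact Nat.mul_le_mul (Finset.card_le_card (Sig_child_subset false))
    (Finset.card_le_card (Sig_child_subset true))

lemma card_step_root {p : List Bool} {m : ℕ} (hc : χ p = c) :
    (Sig χ c (p ++ [false]) m).card + (Sig χ c (p ++ [true]) m).card ≤
      (Sig χ c p (m + 1)).card := by
  classical
  set A := Sig χ c (p ++ [false]) m
  set B := Sig χ c (p ++ [true]) m
  set T := Sig χ c p (m + 1)
  have h1 : A ∪ B ⊆ T := Finset.union_subset (Sig_child_subset false) (Sig_child_subset true)
  have h2 : (A ∩ B).image (insert p.length) ⊆ T := by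
    intro τ hτ
    obtain ⟨σ, hσ, rfl⟩ := Finset.mem_image.1 hτ
    exact Sig_insert hc (Finset.mem_inter.1 hσ).1 (Finset.mem_inter.1 hσ).2
  have hdisj : Disjoint (A ∪ B) ((A ∩ B).image (insert p.length)) := by
    rw [Finset.disjoint_left]
    intro σ hσ hσ'
    obtain ⟨τ, -, rfl⟩ := Finset.mem_image.1 hσ'
    rcases Finset.mem_union.1 hσ with h | h
    · exact notMem_of_mem_Sig_child h (Finset.mem_insert_self _ _)
    · exact notMem_of_mem_Sig_child h (Finset.mem_insert_self _ _)
  have hinj : ((A ∩ B).image (insert p.length)).card = (A ∩ B).card := by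
    apply Finset.card_image_of_injOn
    intro σ hσ τ hτ hst
    have hσ' : p.length ∉ σ := notMem_of_mem_Sig_child (Finset.mem_inter.1 hσ).1
    have hτ' : p.length ∉ τ := notMem_of_mem_Sig_child (Finset.mem_inter.1 hτ).1
    have := congrArg (·.erase p.length) hst
    simpa [Finset.erase_insert hσ', Finset.erase_insert hτ'] using this
  calc A.card + B.card = (A ∪ B).card + (A ∩ B).card :=
        (Finset.card_union_add_card_inter A B).symm
    _ = (A ∪ B).card + ((A ∩ B).image (insert p.length)).card := by rw [hinj]
    _ = ((A ∪ B) ∪ (A ∩ B).image (insert p.length)).card :=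
        (Finset.card_union_of_disjoint hdisj).symm
    _ ≤ T.card := Finset.card_le_card (Finset.union_subset h1 h2)

lemma prod_sig : ∀ (m : ℕ) (p : List Bool), 2 ^ m ≤ ∏ c : Fin k, (Sig χ c p m).card := by
  intro m
  induction m with
  | zero =>
    intro p
    have : ∀ c : Fin k, (Sig χ c p 0).card = 1 := by
      intro c
      classical
      simp [Sig, Finset.filter_singleton, embL_nil]
    simp [this]
  | succ m ih =>
    intro p
    have key : (2 ^ (m+1)) ^ 2 ≤ (∏ c : Fin k, (Sig χ c p (m+1)).card) ^ 2 := by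
      have e1 : (∏ c : Fin k, (Sig χ c p (m+1)).card) ^ 2
          = ∏ c : Fin k, (Sig χ c p (m+1)).card ^ 2 := by
        rw [← Finset.prod_pow]
      have hmem : χ p ∈ (Finset.univ : Finset (Fin k)) := Finset.mem_univ _
      have e2 : 4 * ∏ c : Fin k, ((Sig χ c (p ++ [false]) m).card *
          (Sig χ c (p ++ [true]) m).card) ≤ ∏ c : Fin k, (Sig χ c p (m+1)).card ^ 2 := by
        rw [← Finset.mul_prod_erase _ _ hmem, ← Finset.mul_prod_erase _
          (fun c => (Sig χ c p (m+1)).card ^ 2) hmem, ← mul_assoc]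
        apply Nat.mul_le_mul
        · have h := card_step_root (χ := χ) (p := p) (m := m) (c := χ p) rfl
          have hab : ∀ a b : ℕ, 4 * (a * b) ≤ (a + b) ^ 2 := by
            intro a b
            zify
            nlinarith [sq_nonneg ((a : ℤ) - b)]
          calc 4 * ((Sig χ (χ p) (p ++ [false]) m).card * (Sig χ (χ p) (p ++ [true]) m).card)
              ≤ ((Sig χ (χ p) (p ++ [false]) m).card + (Sig χ (χ p) (p ++ [true]) m).card) ^ 2 :=
                hab _ _
            _ ≤ (Sig χ (χ p) p (m+1)).card ^ 2 := Nat.pow_le_pow_left h 2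
        · exact Finset.prod_le_prod' (fun c _ => card_step_other)
      have e3 : ((2:ℕ) ^ (m+1)) ^ 2 ≤ 4 * ∏ c : Fin k, ((Sig χ c (p ++ [false]) m).card *
          (Sig χ c (p ++ [true]) m).card) := by
        rw [Finset.prod_mul_distrib]
        have := Nat.mul_le_mul (ih (p ++ [false])) (ih (p ++ [true]))
        calc ((2:ℕ) ^ (m+1)) ^ 2 = 4 * (2 ^ m * 2 ^ m) := by ring
          _ ≤ 4 * ((∏ c : Fin k, (Sig χ c (p ++ [false]) m).card) *
              ∏ c : Fin k, (Sig χ c (p ++ [true]) m).card) := Nat.mul_le_mul_left 4 this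
      rw [e1]
      exact e3.trans e2
    exact (Nat.pow_le_pow_iff_left (by norm_num)).1 key

lemma Sig_card_le {n d : ℕ} (hall : ∀ σ ∈ Sig χ c ([] : List Bool) n, σ.card < d) :
    (Sig χ c ([] : List Bool) n).card ≤ ∑ j ∈ Finset.range d, n.choose j := by
  classical
  have hsub : Sig χ c ([] : List Bool) n ⊆ (Finset.range d).biUnion
      (fun j => Finset.powersetCard j (Finset.Ico 0 n)) := by
    intro σ hσ
    refine Finset.mem_biUnion.2 ⟨σ.card, Finset.mem_range.2 (hall σ hσ), ?_⟩
    refine Finset.mem_powersetCard.2 ⟨?_, rfl⟩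
    have := (mem_Sig.1 hσ).1
    simpa using this
  refine (Finset.card_le_card hsub).trans ?_
  refine (Finset.card_biUnion_le).trans ?_
  apply Finset.sum_le_sum
  intro j _
  rw [Finset.card_powersetCard]
  simp

open scoped Classical in
noncomputable def pickQ (χ : List Bool → Fin k) (c : Fin k) (p : List Bool) (l : ℕ)
    (L : List ℕ) : List Bool :=
  if h : ∃ q : List Bool, p <+: q ∧ q.length = l ∧ χ q = c ∧
      EmbL χ c (q ++ [false]) L ∧ EmbL χ c (q ++ [true]) L then h.choose else []

lemma pickQ_spec {p : List Bool} {l : ℕ} {L : List ℕ} (h : EmbL χ c p (l :: L)) :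
    p <+: pickQ χ c p l L ∧ (pickQ χ c p l L).length = l ∧ χ (pickQ χ c p l L) = c ∧
    EmbL χ c (pickQ χ c p l L ++ [false]) L ∧ EmbL χ c (pickQ χ c p l L ++ [true]) L := by
  have h' : ∃ q : List Bool, p <+: q ∧ q.length = l ∧ χ q = c ∧
      EmbL χ c (q ++ [false]) L ∧ EmbL χ c (q ++ [true]) L := h
  rw [pickQ, dif_pos h']
  exact h'.choose_spec

noncomputable def buildF (χ : List Bool → Fin k) (c : Fin k) :
    List ℕ → List Bool → List Bool → List Bool
  | [], _, _ => []
  | l :: L, p, [] => pickQ χ c p l L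
  | l :: L, p, b :: x => buildF χ c L (pickQ χ c p l L ++ [b]) x

lemma buildF_spec : ∀ (x : List Bool) (L : List ℕ) (p : List Bool), EmbL χ c p L →
    x.length < L.length →
    χ (buildF χ c L p x) = c ∧ (buildF χ c L p x).length = L.getD x.length 0
  | [], [], _, _, hlen => by simp at hlen
  | [], l :: L, p, h, _ => by
    obtain ⟨h1, h2, h3, h4, h5⟩ := pickQ_spec h
    simpa [buildF] using ⟨h3, h2⟩
  | b :: x, [], _, _, hlen => by simp at hlen
  | b :: x, l :: L, p, h, hlen => by
    obtain ⟨h1, h2, h3, h4, h5⟩ := pickQ_spec h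
    have hch : EmbL χ c (pickQ χ c p l L ++ [b]) L := by cases b <;> assumption
    have := buildF_spec x L (pickQ χ c p l L ++ [b]) hch (by simpa using hlen)
    simpa [buildF] using this

lemma buildF_child : ∀ (x : List Bool) (L : List ℕ) (p : List Bool) (b : Bool),
    EmbL χ c p L → x.length + 1 < L.length →
    buildF χ c L p x ++ [b] <+: buildF χ c L p (x ++ [b])
  | [], [], _, _, _, hlen => by simp at hlen
  | [], [l], _, _, _, hlen => by simp at hlen
  | [], l :: l' :: L, p, b, h, _ => by
    obtain ⟨h1, h2, h3, h4, h5⟩ := pickQ_spec h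
    have hch : EmbL χ c (pickQ χ c p l (l' :: L) ++ [b]) (l' :: L) := by
      cases b <;> assumption
    obtain ⟨g1, g2, g3, g4, g5⟩ := pickQ_spec hch
    simpa [buildF] using g1
  | b' :: x, [], _, _, _, hlen => by simp at hlen
  | b' :: x, l :: L, p, b, h, hlen => by
    obtain ⟨h1, h2, h3, h4, h5⟩ := pickQ_spec h
    have hch : EmbL χ c (pickQ χ c p l L ++ [b']) L := by cases b' <;> assumption
    have := buildF_child x L (pickQ χ c p l L ++ [b']) b hch (by simpa using hlen)
    simpa [buildF] using this

end TreeRamsey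


lemma arith_contra (a b dd kk nn : ℝ) (ha : 0.6931471803 < a) (hab : a ≤ b)
    (hd2 : 2 ≤ dd) (hk2 : 2 ≤ kk)
    (h1 : nn * a ≤ kk * (dd-1) * (3*a+b) + nn/8)
    (h2 : 5 * dd * kk * b < nn * a) : False := by
  have ha0 : (0:ℝ) < a := by linarith
  have hb0 : (0:ℝ) < b := by linarith
  have hk0 : (0:ℝ) < kk := by linarith
  have h8a1 : (0:ℝ) < 8*a - 1 := by linarith
  set R : ℝ := kk * (dd-1) * (3*a+b) with hR_def
  have e0 : nn * (8*a-1) ≤ 8*R := by linarith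
  have h3 : 5 * dd * kk * b * (8*a-1) < 8 * a * R := by
    have s1 : 5*dd*kk*b*(8*a-1) < (nn*a)*(8*a-1) := mul_lt_mul_of_pos_right h2 h8a1
    have s3 : a*(nn*(8*a-1)) ≤ a*(8*R) := mul_le_mul_of_nonneg_left e0 (le_of_lt ha0)
    nlinarith [s1, s3]
  have h4 : 5 * b * (8*a-1) < 8 * a * (3*a+b) := by
    have hdk : (0:ℝ) < dd * kk := by positivity
    have hstep : kk*(dd-1) ≤ kk*dd := by
      apply mul_le_mul_of_nonneg_left (by linarith) (le_of_lt hk0)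
    have rhs_le : 8 * a * R ≤ (8 * a * (3*a+b)) * (dd*kk) := by
      have e1 : 8 * a * R = (8*a*(3*a+b)) * (kk*(dd-1)) := by rw [hR_def]; ring
      have e2 : (8*a*(3*a+b)) * (kk*(dd-1)) ≤ (8*a*(3*a+b)) * (kk*dd) := by
        apply mul_le_mul_of_nonneg_left hstep
        positivity
      have e3 : (8*a*(3*a+b)) * (kk*dd) = (8 * a * (3*a+b)) * (dd*kk) := by ring
      linarith
    have lhs_eq : 5 * dd * kk * b * (8*a-1) = (5 * b * (8*a-1)) * (dd*kk) := by ring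
    have h5 : (5 * b * (8*a-1)) * (dd*kk) < (8 * a * (3*a+b)) * (dd*kk) := by
      rw [← lhs_eq]; linarith
    exact lt_of_mul_lt_mul_right h5 (le_of_lt hdk)
  nlinarith [h4, hab, ha, mul_nonneg (sub_nonneg.2 hab) (by linarith : (0:ℝ) ≤ 32*a - 5),
    mul_pos ha0 (by linarith : (0:ℝ) < 8*a - 5)]

lemma analytic (k d n : ℕ) (hk : 2 ≤ k) (hd : 2 ≤ d)
    (h : 5 * (d : ℝ) * k * Real.logb 2 k < n)
    (hbig : (2:ℕ) ^ n ≤ (∑ j ∈ Finset.range d, n.choose j) ^ k) : False := by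
  set a := Real.log 2 with ha_def
  set b := Real.log k with hb_def
  have ha : 0.6931471803 < a := Real.log_two_gt_d9
  have ha0 : 0 < a := by norm_num at ha ⊢; linarith
  have hk0 : (0:ℝ) < k := by positivity
  have hk2 : (2:ℝ) ≤ k := by exact_mod_cast hk
  have hd2 : (2:ℝ) ≤ d := by exact_mod_cast hd
  have hab : a ≤ b := Real.log_le_log (by norm_num) hk2
  have hlogb : Real.logb 2 k = b / a := by simp [Real.logb, ha_def, hb_def]
  -- basic: n > d
  have hba : 1 ≤ b / a := (one_le_div ha0).2 hab
  have hdn : (d:ℝ) < n := by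
    have h10 : (d:ℝ) ≤ 5 * d * k * 1 := by
      nlinarith [mul_nonneg (by linarith : (0:ℝ) ≤ (d:ℝ)) (by linarith : (0:ℝ) ≤ 5*(k:ℝ) - 1)]
    have h11 : 5 * (d:ℝ) * k * 1 ≤ 5 * d * k * (b/a) := by
      apply mul_le_mul_of_nonneg_left hba; positivity
    have h' := h
    rw [hlogb] at h'
    linarith
  have hdn' : d < n := by exact_mod_cast hdn
  -- the y-trick bound
  set y : ℝ := (8 * (k:ℝ))⁻¹ with hy_def
  have hy0 : 0 < y := by positivity
  have hy1 : y ≤ 1 := by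
    rw [hy_def]
    rw [inv_le_one_iff₀]
    right; linarith
  set N : ℕ := ∑ j ∈ Finset.range d, n.choose j with hN_def
  have h8k : (1:ℝ) ≤ 8 * k := by linarith
  have hNle : (N:ℝ) ≤ (8*(k:ℝ)) ^ (d-1) * (1+y) ^ n := by
    push_cast [hN_def]
    have step1 : ∑ j ∈ Finset.range d, (n.choose j : ℝ) ≤
        (8*(k:ℝ)) ^ (d-1) * ∑ j ∈ Finset.range d, (n.choose j : ℝ) * y ^ j := by
      rw [Finset.mul_sum]
      apply Finset.sum_le_sum
      intro j hj
      have hj' : j ≤ d - 1 := by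
        have := Finset.mem_range.1 hj; omega
      have key : (1:ℝ) ≤ (8*(k:ℝ)) ^ (d-1) * y ^ j := by
        have : (8*(k:ℝ)) ^ (d-1) * y ^ j = (8*(k:ℝ)) ^ (d-1) / (8*(k:ℝ)) ^ j := by
          rw [hy_def, inv_pow]
          ring
        rw [this, le_div_iff₀ (by positivity)]
        rw [one_mul]
        exact pow_le_pow_right₀ h8k hj'
      calc (n.choose j : ℝ) = 1 * (n.choose j : ℝ) := by ring
        _ ≤ ((8*(k:ℝ)) ^ (d-1) * y ^ j) * (n.choose j : ℝ) := by
            apply mul_le_mul_of_nonneg_right key; positivity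
        _ = (8*(k:ℝ)) ^ (d-1) * ((n.choose j : ℝ) * y ^ j) := by ring
    have step2 : ∑ j ∈ Finset.range d, (n.choose j : ℝ) * y ^ j ≤ (1+y) ^ n := by
      have hexp : (1+y) ^ n = ∑ j ∈ Finset.range (n+1), (n.choose j : ℝ) * y ^ j := by
        have := add_pow y 1 n
        simp only [one_pow, mul_one] at this
        rw [add_comm 1 y]
        rw [this]
        apply Finset.sum_congr rfl
        intro j hj
        ring
      rw [hexp]
      apply Finset.sum_le_sum_of_subset_of_nonneg
      · exact Finset.range_subset_range.2 (by omega)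
      · intro j _ _; positivity
    calc ∑ j ∈ Finset.range d, (n.choose j : ℝ)
        ≤ (8*(k:ℝ)) ^ (d-1) * ∑ j ∈ Finset.range d, (n.choose j : ℝ) * y ^ j := step1
      _ ≤ (8*(k:ℝ)) ^ (d-1) * (1+y) ^ n := by
          apply mul_le_mul_of_nonneg_left step2; positivity
  -- take logs
  have hbigR : (2:ℝ) ^ n ≤ ((8*(k:ℝ)) ^ (d-1) * (1+y) ^ n) ^ k := by
    calc (2:ℝ) ^ n ≤ (N:ℝ) ^ k := by exact_mod_cast hbig
      _ ≤ ((8*(k:ℝ)) ^ (d-1) * (1+y) ^ n) ^ k := by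
          apply pow_le_pow_left₀ (by positivity) hNle
  have hlog : (n:ℝ) * a ≤ k * ((d-1) * (3*a + b) + n * y) := by
    have l1 : Real.log ((2:ℝ) ^ n) ≤ Real.log (((8*(k:ℝ)) ^ (d-1) * (1+y) ^ n) ^ k) :=
      Real.log_le_log (by positivity) hbigR
    rw [Real.log_pow, Real.log_pow, Real.log_mul (by positivity) (by positivity),
      Real.log_pow, Real.log_pow] at l1
    have l8k : Real.log (8*(k:ℝ)) = 3*a + b := by
      rw [Real.log_mul (by norm_num) (by positivity)]
      have : (8:ℝ) = 2 ^ 3 := by norm_num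
      rw [this, Real.log_pow]
      push_cast; ring
    have ly : Real.log (1+y) ≤ y := by
      have := Real.log_le_sub_one_of_pos (x := 1+y) (by linarith)
      linarith
    rw [l8k] at l1
    calc (n:ℝ) * a ≤ (k:ℝ) * ((d-1 : ℕ) * (3*a+b) + n * Real.log (1+y)) := by
          push_cast at l1 ⊢; linarith
      _ ≤ k * ((d-1 : ℕ) * (3*a+b) + n * y) := by
          apply mul_le_mul_of_nonneg_left _ (le_of_lt hk0)
          have : (n:ℝ) * Real.log (1+y) ≤ n * y := by
            apply mul_le_mul_of_nonneg_left ly (by positivity)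
          linarith
      _ = k * ((d-1) * (3*a+b) + n * y) := by
          congr 2
          push_cast [Nat.cast_sub (by omega : 1 ≤ d)]
          ring
  -- simplify k * n * y = n / 8
  have hkny : (k:ℝ) * ((n:ℝ) * y) = n / 8 := by
    rw [hy_def]
    field_simp
  have h1 : (n:ℝ) * a ≤ k * (d-1) * (3*a+b) + n/8 := by
    have expand : (k:ℝ) * (((d:ℝ)-1)*(3*a+b) + n*y) = k*((d:ℝ)-1)*(3*a+b) + k*((n:ℝ)*y) := by
      ring
    rw [expand, hkny] at hlog
    exact hlog
  have h2 : 5 * (d:ℝ) * k * b < (n:ℝ) * a := by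
    have h' := h
    rw [hlogb] at h'
    have hmul := mul_lt_mul_of_pos_right h' ha0
    have e : 5*(d:ℝ)*k*(b/a)*a = 5*d*k*b := by
      rw [mul_assoc (5*(d:ℝ)*k) (b/a) a, div_mul_cancel₀ _ (ne_of_gt ha0)]
    linarith
  exact arith_contra a b d k n ha hab hd2 hk2 h1 h2
-- appended part: final theorem (to be concatenated after full1 minus trailing)



open TreeRamsey

/-- For `k, d, n ≥ 2` with `n > 5·d·k·log₂ k`, every `k`-coloring of the
vertices of `T_n` admits a monochromatic replica of `T_d`. -/
theorem stmt6 (k d n : ℕ) (hk : 2 ≤ k) (hd : 2 ≤ d) (hn : 2 ≤ n)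
    (h : 5 * (d : ℝ) * k * Real.logb 2 k < n) (χ : List Bool → Fin k) :
    ∃ (c : Fin k) (f : List Bool → List Bool), IsRegEmb d f ∧
      ∀ x : List Bool, x.length < d → f x ∈ treeVerts n ∧ χ (f x) = c := by
  classical
  by_contra hcon
  push_neg at hcon
  have hall : ∀ c : Fin k, ∀ σ ∈ Sig χ c ([] : List Bool) n, σ.card < d := by
    intro c σ hσ
    by_contra hbig
    push_neg at hbig
    obtain ⟨hsub, hemb⟩ := mem_Sig.1 hσ
    set L0 := σ.sort (· ≤ ·) with hL0
    set L := L0.take d with hL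
    have hembL : EmbL χ c [] L := EmbL.take χ c L0 d [] hemb
    have hlenL : L.length = d := by
      rw [hL, List.length_take, hL0, Finset.length_sort]
      omega
    have hmemL : ∀ l ∈ L, l < n := by
      intro l hl
      have h1 : l ∈ L0 := (List.take_prefix d L0).subset hl
      have h2 : l ∈ σ := (Finset.mem_sort _).1 h1
      have h3 := hsub h2
      simp [Finset.mem_Ico] at h3
      exact h3
    set f := buildF χ c L ([] : List Bool) with hf
    have hreg : IsRegEmb d f := by
      constructor
      · intro x y hx hy hxy
        have sx := buildF_spec (χ := χ) (c := c) x L [] hembL (by omega)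
        have sy := buildF_spec (χ := χ) (c := c) y L [] hembL (by omega)
        rw [hf, sx.2, sy.2, hxy]
      · intro x hx
        refine ⟨false, ?_, ?_⟩
        · exact buildF_child x L [] false hembL (by omega)
        · simpa using buildF_child x L [] true hembL (by omega)
    obtain ⟨x, hxd, hxbad⟩ := hcon c f hreg
    have s := buildF_spec (χ := χ) (c := c) x L [] hembL (by omega)
    have hmem : f x ∈ treeVerts n := by
      have hlt : x.length < L.length := by omega
      have : (f x).length = L.getD x.length 0 := s.2
      rw [List.getD_eq_getElem L 0 hlt] at this
      have hin : L[x.length] ∈ L := List.getElem_mem hlt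
      have : (f x).length < n := by rw [this]; exact hmemL _ hin
      simpa [treeVerts] using this
    exact hxbad hmem s.1
  have h2n : (2:ℕ) ^ n ≤ (∑ j ∈ Finset.range d, n.choose j) ^ k := by
    calc (2:ℕ) ^ n ≤ ∏ c : Fin k, (Sig χ c ([] : List Bool) n).card := prod_sig n []
      _ ≤ (∑ j ∈ Finset.range d, n.choose j) ^ k := by
          have := Finset.prod_le_pow_card Finset.univ
            (fun c : Fin k => (Sig χ c ([] : List Bool) n).card)
            (∑ j ∈ Finset.range d, n.choose j)
            (fun c _ => Sig_card_le (hall c))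
          simpa using this
  exact analytic k d n hk hd h h2n
end

section
/- Suppose there exists a k-coloring χ' of T_{n'} admitting no monochromatic regular embedding of T_2. Then for n = (d−1)·n' with d ≥ 2, there exists a k-coloring of T_n admitting no monochromatic regular embedding of T_d, obtained by partitioning T_n into blocks of n' consecutive levels and coloring each maximal subtree within a block according to χ'. -/
lemma drop_prefix_of_prefix {a b : List Bool} (m : ℕ) (h : a <+: b) (hm : m ≤ a.length) :
    a.drop m <+: b.drop m := by
  obtain ⟨s, rfl⟩ := h
  refine ⟨s, ?_⟩
  rw [List.drop_append, Nat.sub_eq_zero_of_le hm, List.drop_zero]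

lemma regemb_chain {d : ℕ} {f : List Bool → List Bool} (hf : IsRegEmb d f) :
    ∀ (t : ℕ) (y : List Bool), y.length + t < d →
      f y <+: f (y ++ List.replicate t false) ∧
      (f y).length + t ≤ (f (y ++ List.replicate t false)).length := by
  intro t
  induction t with
  | zero => intro y h; simp
  | succ t ih =>
    intro y h
    obtain ⟨c, hc, _⟩ := hf.2 y (by omega)
    have h1 : f y <+: f (y ++ [false]) := ((f y).prefix_append [c]).trans hc
    have h2 : (f y).length + 1 ≤ (f (y ++ [false])).length := by
      have := hc.length_le; simp at this; omega
    have h3 := ih (y ++ [false]) (by simp; omega)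
    have he : y ++ List.replicate (t+1) false = (y ++ [false]) ++ List.replicate t false := by
      simp [List.replicate_succ]
    rw [he]
    exact ⟨h1.trans h3.1, by omega⟩

lemma key {k n' d : ℕ} (hn' : 0 < n') (χ' : List Bool → Fin k)
    (f : List Bool → List Bool) (c : Fin k) (hf : IsRegEmb d f)
    (hmem : ∀ x : List Bool, x.length < d → f x ∈ treeVerts ((d - 1) * n') ∧
      χ' ((f x).drop (n' * ((f x).length / n'))) = c)
    (i j : ℕ) (hij : i < j) (hjd : j < d)
    (hq : (f (List.replicate i false)).length / n' = (f (List.replicate j false)).length / n') :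
    ∃ (g : List Bool → List Bool) (c : Fin k), IsRegEmb 2 g ∧
      ∀ x : List Bool, x.length < 2 → g x ∈ treeVerts n' ∧ χ' (g x) = c := by
  set u := f (List.replicate i false) with hu
  set Li := u.length with hLi
  set Lj := (f (List.replicate j false)).length with hLj
  set m := n' * (Li / n') with hm
  set t := j - i - 1 with ht
  set v : Bool → List Bool := fun b => f (List.replicate i false ++ b :: List.replicate t false)
    with hv
  -- basic arithmetic facts
  have hmLi : m ≤ Li := by
    have := Nat.div_mul_le_self Li n'
    rw [hm, Nat.mul_comm]; omega
  have hmodLi : Li - m < n' := by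
    have h1 := Nat.mod_add_div Li n'
    have h2 := Nat.mod_lt Li hn'
    omega
  have hmodLj : Lj - m < n' := by
    have h1 := Nat.mod_add_div Lj n'
    have h2 := Nat.mod_lt Lj hn'
    rw [hm, hq]; omega
  -- lengths of v b
  have hlenv : ∀ b, (v b).length = Lj := by
    intro b
    apply hf.1
    · simp; omega
    · simpa using hjd
    · simp; omega
  -- child structure
  obtain ⟨c0, hc0, hc1⟩ := hf.2 (List.replicate i false) (by simp; omega)
  have hchain : ∀ b : Bool, f (List.replicate i false ++ [b]) <+: v b := by
    intro b
    have h := (regemb_chain hf t (List.replicate i false ++ [b]) (by simp; omega)).1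
    rwa [List.append_assoc, List.singleton_append] at h
  have hpre0 : u ++ [c0] <+: v false := hc0.trans (hchain false)
  have hpre1 : u ++ [!c0] <+: v true := hc1.trans (hchain true)
  -- the T_2 embedding
  set g : List Bool → List Bool := fun x => match x with
    | [] => u.drop m
    | b :: _ => (v b).drop m
    with hg
  refine ⟨g, c, ⟨?_, ?_⟩, ?_⟩
  · intro x y hx hy hxy
    match x, y with
    | [], [] => rfl
    | [], b :: l => simp at hxy
    | a :: l, [] => simp at hxy
    | a :: l, b :: l' =>
      show ((v a).drop m).length = ((v b).drop m).length
      rw [List.length_drop, List.length_drop, hlenv, hlenv]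
  · intro x hx
    have hx0 : x = [] := List.length_eq_zero_iff.mp (by omega)
    subst hx0
    refine ⟨c0, ?_, ?_⟩
    · show u.drop m ++ [c0] <+: (v false).drop m
      have h := drop_prefix_of_prefix m hpre0 (by simp; omega)
      rwa [List.drop_append, Nat.sub_eq_zero_of_le hmLi, List.drop_zero] at h
    · show u.drop m ++ [!c0] <+: (v true).drop m
      have h := drop_prefix_of_prefix m hpre1 (by simp; omega)
      rwa [List.drop_append, Nat.sub_eq_zero_of_le hmLi, List.drop_zero] at h
  · intro x hx
    match x with
    | [] =>
      refine ⟨?_, ?_⟩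
      · show u.drop m ∈ treeVerts n'
        simp only [treeVerts, Set.mem_setOf_eq, List.length_drop]
        omega
      · have h := (hmem (List.replicate i false) (by simp; omega)).2
        exact h
    | b :: l =>
      refine ⟨?_, ?_⟩
      · show (v b).drop m ∈ treeVerts n'
        simp only [treeVerts, Set.mem_setOf_eq, List.length_drop, hlenv]
        omega
      · have h := (hmem (List.replicate i false ++ b :: List.replicate t false)
          (by simp; omega)).2
        show χ' ((v b).drop m) = c
        have hmm : n' * ((v b).length / n') = m := by rw [hlenv, hm, hq]
        rw [← hmm]
        exact h

/-- If a `k`-coloring `χ'` of `T_{n'}` admits no monochromatic regular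
embedding of `T_2`, then the `k`-coloring `χ` of `T_{(d-1)·n'}` obtained by
partitioning the levels into blocks of `n'` consecutive levels and coloring
each maximal subtree within a block according to `χ'` (a vertex `x` is colored
by applying `χ'` to its position within its block's subtree) admits no
monochromatic regular embedding of `T_d`. -/
theorem stmt8 (k n' d : ℕ) (hd : 2 ≤ d) (χ' : List Bool → Fin k)
    (hχ' : ¬ ∃ (f : List Bool → List Bool) (c : Fin k), IsRegEmb 2 f ∧
        ∀ x : List Bool, x.length < 2 → f x ∈ treeVerts n' ∧ χ' (f x) = c)
    (χ : List Bool → Fin k)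
    (hχ : ∀ x : List Bool, χ x = χ' (x.drop (n' * (x.length / n')))) :
    ¬ ∃ (f : List Bool → List Bool) (c : Fin k), IsRegEmb d f ∧
        ∀ x : List Bool, x.length < d →
          f x ∈ treeVerts ((d - 1) * n') ∧ χ (f x) = c := by
  rintro ⟨f, c, hf, hmem⟩
  have hmem' : ∀ x : List Bool, x.length < d → f x ∈ treeVerts ((d - 1) * n') ∧
      χ' ((f x).drop (n' * ((f x).length / n'))) = c := by
    intro x hx
    refine ⟨(hmem x hx).1, ?_⟩
    rw [← hχ]; exact (hmem x hx).2
  rcases Nat.eq_zero_or_pos n' with rfl | hn'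
  · have := (hmem [] (by simp; omega)).1
    simp [treeVerts] at this
  have hlt : ∀ i : Fin d, (f (List.replicate i false)).length / n' < d - 1 := by
    intro i
    have h := (hmem (List.replicate i false) (by simp)).1
    simp only [treeVerts, Set.mem_setOf_eq] at h
    exact Nat.div_lt_of_lt_mul (by rwa [Nat.mul_comm] at h)
  obtain ⟨i, j, hij, heq⟩ := Fintype.exists_ne_map_eq_of_card_lt
    (fun i : Fin d => (⟨(f (List.replicate i false)).length / n', hlt i⟩ : Fin (d-1)))
    (by simp; omega)
  have heq' : (f (List.replicate (i:ℕ) false)).length / n'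
      = (f (List.replicate (j:ℕ) false)).length / n' := by
    simpa [Fin.mk.injEq] using heq
  have hijne : (i : ℕ) ≠ (j : ℕ) := fun h => hij (Fin.ext h)
  rcases Nat.lt_or_ge (i:ℕ) (j:ℕ) with h | h
  · exact hχ' (key hn' χ' f c hf hmem' i j h j.isLt heq')
  · exact hχ' (key hn' χ' f c hf hmem' j i (by omega) i.isLt heq'.symm)
end

section
/- In the random split coloring of T_n, there is no monochromatic regular embedding of T_2: for any regular embedding f of T_2 into T_n, if x is the image of the root and y, z are the images of the two leaves (lying at a common level l and being descendants of distinct children of x), then the color of x differs from the color of y or from the color of z. -/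
/-- The random split coloring admits no monochromatic replica of `T_2`.
We model any run of the algorithm by a coloring `χ` and forbidden lists
`Forb` such that each vertex gets a color not on its forbidden list, and
whenever a vertex `x` is colored, for each level `l` below `x` the color of
`x` is forbidden for all level-`l` descendants of one of the two children of
`x`. Then for any regular embedding of `T_2`, the image of the root differs
in color from the image of one of the two leaves. -/
theorem stmt9 (n : ℕ) (χ : List Bool → ℕ) (Forb : List Bool → Set ℕ)
    (hperm : ∀ v : List Bool, χ v ∉ Forb v)
    (hsplit : ∀ x : List Bool, ∀ l : ℕ, x.length < l →
      ∃ b : Bool, ∀ y : List Bool, (x ++ [b]) <+: y → y.length = l →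
        χ x ∈ Forb y)
    (f : List Bool → List Bool) (hf : IsRegEmb 2 f)
    (hfn : ∀ x : List Bool, x.length < 2 → f x ∈ treeVerts n) :
    χ (f []) ≠ χ (f [false]) ∨ χ (f []) ≠ χ (f [true]) := by
  obtain ⟨hlev, hchild⟩ := hf
  obtain ⟨c, hcf, hct⟩ := hchild [] (by simp)
  simp only [List.nil_append] at hcf hct
  set l := (f [false]).length with hl
  have hlen : (f []).length < l := by
    have := hcf.length_le
    simp at this; omega
  have hlt : (f [true]).length = l :=
    hlev [true] [false] (by simp) (by simp) rfl
  obtain ⟨b, hb⟩ := hsplit (f []) l hlen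
  by_cases hbc : b = c
  · left; intro h; subst hbc; exact hperm _ (h ▸ hb _ hcf rfl)
  · right; intro h
    have hb' : b = !c := by cases b <;> cases c <;> simp_all
    subst hb'
    exact hperm _ (h ▸ hb _ hct hlt)
end

section
/- Let T_{n,s} be the full s-ary tree of depth n−1 with vertex weight s^(−l) at level l, and let H ⊆ V(T_{n,s}). Let S(H) be the set of signatures of all regular embeddings of trees T_{d,s} (d ≥ 0) into H. Then Σ_{σ∈S(H)} (s−1)^(−|σ|) ≥ (s/(s−1))^(w(H)); in particular |S(H)| ≥ (s/(s−1))^(w(H)). -/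
/-- Vertex set of the full `s`-ary tree `T_{n,s}` of depth `n-1`:
strings over an `s`-letter alphabet of length `< n`; the level of a vertex is
its length. -/
def sTreeVerts (s n : ℕ) : Set (List (Fin s)) := {x | x.length < n}

/-- Weight of a set of vertices of the `s`-ary tree:
`w(H) = Σ_{x ∈ H} s^(-level x)`. -/
noncomputable def sWeight (s : ℕ) (H : Set (List (Fin s))) : ℝ :=
  ∑' x : H, (s : ℝ) ^ (-((x : List (Fin s)).length : ℤ))

/-- `f` is a regular embedding of `T_{d,s}`: equal levels map to equal levels,
and the `s` children of each vertex map to descendants of `s` distinct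
children of the image. -/
def IsRegEmbS (s d : ℕ) (f : List (Fin s) → List (Fin s)) : Prop :=
  (∀ x y : List (Fin s), x.length < d → y.length < d → x.length = y.length →
      (f x).length = (f y).length) ∧
  (∀ x : List (Fin s), x.length + 1 < d → ∃ π : Fin s → Fin s,
      Function.Injective π ∧ ∀ i : Fin s, (f x ++ [π i]) <+: f (x ++ [i]))

/-- `S(H)`: the set of signatures (sets of occupied levels) of all regular
embeddings of some `T_{d,s}`, `d ≥ 0`, into `H`. -/
def sSigs (s : ℕ) (H : Set (List (Fin s))) : Set (Set ℕ) :=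
  {σ | ∃ (d : ℕ) (f : List (Fin s) → List (Fin s)), IsRegEmbS s d f ∧
      (∀ x : List (Fin s), x.length < d → f x ∈ H) ∧
      σ = {l : ℕ | ∃ x : List (Fin s), x.length < d ∧ (f x).length = l}}

namespace Stmt10Aux

/-- the signature of an embedding -/
def sig (s d : ℕ) (f : List (Fin s) → List (Fin s)) : Set ℕ :=
  {l : ℕ | ∃ x : List (Fin s), x.length < d ∧ (f x).length = l}

noncomputable def aTerm (s : ℕ) (σ : Set ℕ) : ℝ := ((s : ℝ) - 1) ^ (-(σ.ncard : ℤ))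

lemma aTerm_nonneg {s : ℕ} (hs : 2 ≤ s) (σ : Set ℕ) : 0 ≤ aTerm s σ := by
  have : (0:ℝ) ≤ (s:ℝ) - 1 := by
    have : (2:ℝ) ≤ (s:ℝ) := by exact_mod_cast hs
    linarith
  exact zpow_nonneg this _

lemma aTerm_le_one {s : ℕ} (hs : 2 ≤ s) (σ : Set ℕ) : aTerm s σ ≤ 1 := by
  have : (1:ℝ) ≤ (s:ℝ) - 1 := by
    have : (2:ℝ) ≤ (s:ℝ) := by exact_mod_cast hs
    linarith
  exact zpow_le_one_of_nonpos₀ this (by omega)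

lemma empty_mem_sSigs (s : ℕ) (H : Set (List (Fin s))) : (∅ : Set ℕ) ∈ sSigs s H := by
  refine ⟨0, id, ⟨fun x y hx => by omega, fun x hx => by omega⟩, fun x hx => by omega, ?_⟩
  ext l
  simp only [Set.mem_empty_iff_false, Set.mem_setOf_eq, false_iff]
  rintro ⟨x, hx, -⟩; omega

lemma sSigs_subset {s n : ℕ} {H : Set (List (Fin s))} (hH : H ⊆ sTreeVerts s n) :
    sSigs s H ⊆ {σ | σ ⊆ Set.Iio n ∧ σ.Finite} := by
  rintro σ ⟨d, f, hreg, hmem, rfl⟩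
  have hsub : {l : ℕ | ∃ x : List (Fin s), x.length < d ∧ (f x).length = l} ⊆ Set.Iio n := by
    rintro l ⟨x, hx, rfl⟩
    exact hH (hmem x hx)
  exact ⟨hsub, (Set.finite_Iio n).subset hsub⟩

lemma sSigs_finite {s n : ℕ} {H : Set (List (Fin s))} (hH : H ⊆ sTreeVerts s n) :
    (sSigs s H).Finite := by
  refine Set.Finite.subset ((Set.finite_Iio n).finite_subsets.subset ?_)
    (fun σ hσ => (sSigs_subset hH hσ).1)
  exact fun σ hσ => hσ

/-- tsum over a finite subtype equals the Finset sum. -/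
lemma tsum_finite {A : Set (Set ℕ)} (hA : A.Finite) (f : Set ℕ → ℝ) :
    ∑' σ : A, f σ = ∑ σ ∈ hA.toFinset, f σ := by
  rw [tsum_subtype, tsum_eq_sum (s := hA.toFinset)]
  · exact Finset.sum_congr rfl fun σ hσ =>
      Set.indicator_of_mem (hA.mem_toFinset.1 hσ) f
  · intro b hb
    exact Set.indicator_of_notMem (fun h => hb (hA.mem_toFinset.2 h)) f

lemma tsum_finite' {s : ℕ} {A : Set (List (Fin s))} (hA : A.Finite) (f : List (Fin s) → ℝ) :
    ∑' σ : A, f σ = ∑ σ ∈ hA.toFinset, f σ := by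
  rw [tsum_subtype, tsum_eq_sum (s := hA.toFinset)]
  · exact Finset.sum_congr rfl fun σ hσ =>
      Set.indicator_of_mem (hA.mem_toFinset.1 hσ) f
  · intro b hb
    exact Set.indicator_of_notMem (fun h => hb (hA.mem_toFinset.2 h)) f


section Level
variable {s d : ℕ} {f : List (Fin s) → List (Fin s)}

lemma exists_levelFun (hs : 1 ≤ s) (hf : IsRegEmbS s d f) :
    ∃ L : Fin d → ℕ, StrictMono L ∧
      (∀ (x : List (Fin s)) (h : x.length < d), (f x).length = L ⟨x.length, h⟩) ∧
      sig s d f = Set.range L := by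
  set e : Fin s := ⟨0, hs⟩ with he
  refine ⟨fun k => (f (List.replicate k e)).length, ?_, ?_, ?_⟩
  · have hstep : ∀ k : ℕ, (h : k + 1 < d) →
        (f (List.replicate k e)).length < (f (List.replicate (k+1) e)).length := by
      intro k h
      obtain ⟨π, hπ, hpre⟩ := hf.2 (List.replicate k e) (by simpa using h)
      have h1 := (hpre e).length_le
      simp only [List.length_append, List.length_singleton] at h1
      rw [List.replicate_succ']
      omega
    have key : ∀ (j : ℕ) (hj : j < d) (i : ℕ), i < j →
        (f (List.replicate i e)).length < (f (List.replicate j e)).length := by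
      intro j
      induction j with
      | zero => omega
      | succ j ih =>
        intro hj i hi
        rcases Nat.lt_succ_iff_lt_or_eq.mp hi with h' | h'
        · exact lt_trans (ih (by omega) i h') (hstep j hj)
        · subst h'; exact hstep i hj
    intro a b hab
    exact key b.1 b.2 a.1 hab
  · intro x h
    exact hf.1 x (List.replicate x.length e) h (by simpa using h) (by simp)
  · ext l
    constructor
    · rintro ⟨x, hx, rfl⟩
      exact ⟨⟨x.length, hx⟩, (hf.1 x (List.replicate x.length e) hx (by simpa using hx) (by simp)).symm⟩
    · rintro ⟨k, rfl⟩
      exact ⟨List.replicate k.1 e, by simpa using k.2, rfl⟩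

lemma sig_ncard (hs : 1 ≤ s) (hf : IsRegEmbS s d f) : (sig s d f).ncard = d := by
  obtain ⟨L, hmono, -, hrange⟩ := exists_levelFun hs hf
  rw [hrange, ← Set.image_univ, Set.ncard_image_of_injective _ hmono.injective,
    Set.ncard_univ, Nat.card_eq_fintype_card, Fintype.card_fin]

lemma strictMono_eq_of_range_eq {d : ℕ} {L L' : Fin d → ℕ} (hL : StrictMono L)
    (hL' : StrictMono L') (h : Set.range L = Set.range L') : L = L' := by
  classical
  set F : Finset ℕ := Finset.image L Finset.univ with hF
  have hcard : F.card = d := by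
    rw [hF, Finset.card_image_of_injective _ hL.injective, Finset.card_univ, Fintype.card_fin]
  have hmemL : ∀ x, L x ∈ F := fun x => Finset.mem_image_of_mem _ (Finset.mem_univ x)
  have hmemL' : ∀ x, L' x ∈ F := by
    intro x
    have hx : L' x ∈ Set.range L := by rw [h]; exact Set.mem_range_self x
    obtain ⟨y, hy⟩ := hx
    exact hy ▸ hmemL y
  rw [Finset.orderEmbOfFin_unique hcard hmemL hL,
    Finset.orderEmbOfFin_unique hcard hmemL' hL']

lemma length_eq_of_sig_eq (hs : 1 ≤ s) {g : List (Fin s) → List (Fin s)}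
    (hf : IsRegEmbS s d f) (hg : IsRegEmbS s d g) (hsig : sig s d f = sig s d g)
    {x y : List (Fin s)} (hx : x.length < d) (hy : y.length < d)
    (hxy : x.length = y.length) : (f x).length = (g y).length := by
  obtain ⟨L, hLm, hLwd, hLr⟩ := exists_levelFun hs hf
  obtain ⟨L', hL'm, hL'wd, hL'r⟩ := exists_levelFun hs hg
  have hLL : L = L' := strictMono_eq_of_range_eq hLm hL'm (by rw [← hLr, ← hL'r, hsig])
  rw [hLwd x hx, hL'wd y hy, hLL]
  congr 1
  exact Fin.ext hxy

end Level

def childSet (s : ℕ) (H : Set (List (Fin s))) (i : Fin s) : Set (List (Fin s)) :=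
  {x | i :: x ∈ H}

lemma shift_mem {s : ℕ} {H : Set (List (Fin s))} (i : Fin s) {σ : Set ℕ}
    (hσ : σ ∈ sSigs s (childSet s H i)) : Nat.succ '' σ ∈ sSigs s H := by
  obtain ⟨d, f, hreg, hmem, rfl⟩ := hσ
  refine ⟨d, fun x => i :: f x, ⟨?_, ?_⟩, ?_, ?_⟩
  · intro x y hx hy hxy
    simp only [List.length_cons]
    rw [hreg.1 x y hx hy hxy]
  · intro x hx
    obtain ⟨π, hπ, hpre⟩ := hreg.2 x hx
    refine ⟨π, hπ, fun j => ?_⟩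
    show (i :: f x) ++ [π j] <+: i :: f (x ++ [j])
    simpa [List.cons_prefix_cons] using hpre j
  · intro x hx
    exact hmem x hx
  · ext l
    simp only [Set.mem_image, Set.mem_setOf_eq, List.length_cons]
    constructor
    · rintro ⟨m, ⟨x, hx, rfl⟩, rfl⟩
      exact ⟨x, hx, rfl⟩
    · rintro ⟨x, hx, rfl⟩
      exact ⟨(f x).length, ⟨x, hx, rfl⟩, rfl⟩

lemma combine_mem {s : ℕ} (hs : 2 ≤ s) {H : Set (List (Fin s))} (hroot : [] ∈ H)
    {τ : Set ℕ} (hτ : ∀ i : Fin s, τ ∈ sSigs s (childSet s H i)) :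
    insert 0 (Nat.succ '' τ) ∈ sSigs s H := by
  have hs1 : 1 ≤ s := by omega
  choose dd gg hreg hmem hsig using hτ
  set d := τ.ncard with hd
  have hdd : ∀ i, dd i = d := by
    intro i
    rw [hd, hsig i]
    exact (sig_ncard hs1 (hreg i)).symm
  have hreg' : ∀ i, IsRegEmbS s d (gg i) := fun i => hdd i ▸ hreg i
  have hmem' : ∀ i (x : List (Fin s)), x.length < d → gg i x ∈ childSet s H i :=
    fun i x hx => hmem i x (by rw [hdd i]; exact hx)
  have hsig' : ∀ i, sig s d (gg i) = τ := by
    intro i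
    rw [← hdd i]
    exact (hsig i).symm
  set F : List (Fin s) → List (Fin s) :=
    fun x => match x with | [] => [] | i :: y => i :: gg i y with hF
  have hF0 : F [] = [] := rfl
  have hFc : ∀ (i : Fin s) (y : List (Fin s)), F (i :: y) = i :: gg i y := fun _ _ => rfl
  refine ⟨d + 1, F, ⟨?_, ?_⟩, ?_, ?_⟩
  · intro x y hx hy hxy
    match x, y with
    | [], [] => rfl
    | [], j :: z => simp at hxy
    | i :: w, [] => simp at hxy
    | i :: w, j :: z =>
      rw [hFc, hFc]
      simp only [List.length_cons] at hx hy hxy ⊢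
      have := length_eq_of_sig_eq hs1 (hreg' i) (hreg' j) (by rw [hsig' i, hsig' j])
        (x := w) (y := z) (by omega) (by omega) (by omega)
      omega
  · intro x hx
    match x with
    | [] =>
      refine ⟨id, Function.injective_id, fun i => ?_⟩
      rw [hF0]
      simp only [List.nil_append]
      rw [hFc]
      simp [List.cons_prefix_cons]
    | i :: y =>
      simp only [List.length_cons] at hx
      obtain ⟨π, hπ, hpre⟩ := (hreg' i).2 y (by omega)
      refine ⟨π, hπ, fun j => ?_⟩
      have hco : (i :: y) ++ [j] = i :: (y ++ [j]) := rfl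
      rw [hco, hFc, hFc]
      simpa [List.cons_prefix_cons] using hpre j
  · intro x hx
    match x with
    | [] => rw [hF0]; exact hroot
    | i :: y =>
      simp only [List.length_cons] at hx
      rw [hFc]
      exact hmem' i y (by omega)
  · ext l
    simp only [Set.mem_insert_iff, Set.mem_image, Set.mem_setOf_eq]
    constructor
    · rintro (rfl | ⟨m, hm, rfl⟩)
      · exact ⟨[], by simp, by rw [hF0]; rfl⟩
      · rw [← hsig' ⟨0, by omega⟩] at hm
        obtain ⟨y, hy, hlen⟩ := hm
        refine ⟨(⟨0, by omega⟩ : Fin s) :: y, by simpa using hy, ?_⟩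
        rw [hFc]
        simp [hlen]
    · rintro ⟨x, hx, rfl⟩
      match x with
      | [] => left; rw [hF0]; rfl
      | i :: y =>
        right
        simp only [List.length_cons] at hx
        refine ⟨(gg i y).length, ?_, by rw [hFc]; simp [Nat.succ_eq_add_one]⟩
        rw [← hsig' i]
        exact ⟨y, by omega, rfl⟩

lemma childSet_finite {s : ℕ} {H : Set (List (Fin s))} (hH : H.Finite) (i : Fin s) :
    (childSet s H i).Finite := by
  have h : childSet s H i = (fun y => i :: y) ⁻¹' H := rfl
  rw [h]
  exact hH.preimage (fun a _ b _ hab => by simpa using hab)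

lemma childSet_subset {s n : ℕ} {H : Set (List (Fin s))} (hH : H ⊆ sTreeVerts s (n+1))
    (i : Fin s) : childSet s H i ⊆ sTreeVerts s n := by
  intro x hx
  have := hH hx
  simpa [sTreeVerts] using this

open Classical in
lemma sWeight_decomp {s : ℕ} (hs : 1 ≤ s) {H : Set (List (Fin s))} (hH : H.Finite) :
    sWeight s H = (if [] ∈ H then 1 else 0) +
      (s : ℝ)⁻¹ * ∑ i : Fin s, sWeight s (childSet s H i) := by
  classical
  have hs0 : (s : ℝ) ≠ 0 := by positivity
  set w : List (Fin s) → ℝ := fun x => (s : ℝ) ^ (-(x.length : ℤ)) with hw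
  have wcons : ∀ (i : Fin s) (y : List (Fin s)), w (i :: y) = (s : ℝ)⁻¹ * w y := by
    intro i y
    simp only [hw, List.length_cons]
    rw [show (-((y.length + 1 : ℕ) : ℤ)) = (-1) + (-(y.length : ℤ)) by push_cast; ring,
      zpow_add₀ hs0, zpow_neg_one]
  have hHc : ∀ i : Fin s, (childSet s H i).Finite := childSet_finite hH
  have h1 : sWeight s H = ∑ x ∈ hH.toFinset, w x := tsum_finite' hH w
  have h2 : ∀ i : Fin s, sWeight s (childSet s H i) = ∑ y ∈ (hHc i).toFinset, w y :=
    fun i => tsum_finite' (hHc i) w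
  rw [h1]
  have hsplit : ∑ x ∈ hH.toFinset, w x =
      (if [] ∈ H then 1 else 0) + ∑ x ∈ hH.toFinset.erase [], w x := by
    by_cases h : [] ∈ H
    · rw [if_pos h, ← Finset.sum_erase_add _ _ (hH.mem_toFinset.2 h)]
      have : w [] = 1 := by simp [hw]
      rw [this]
      ring
    · rw [if_neg h, Finset.erase_eq_of_notMem (fun hc => h (hH.mem_toFinset.1 hc))]
      ring
  rw [hsplit]
  letI : Inhabited (Fin s) := ⟨⟨0, hs⟩⟩
  have hbij : ∑ x ∈ hH.toFinset.erase [], w x =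
      ∑ p ∈ Finset.univ.sigma (fun i : Fin s => (hHc i).toFinset), (s:ℝ)⁻¹ * w p.2 := by
    refine (Finset.sum_nbij' (fun x => (⟨x.headI, x.tail⟩ : Σ _ : Fin s, List (Fin s)))
      (fun p => p.1 :: p.2) ?_ ?_ ?_ ?_ ?_).symm.symm
    · intro x hx
      rw [Finset.mem_erase] at hx
      obtain ⟨a, y, rfl⟩ := List.exists_cons_of_ne_nil hx.1
      simp only [List.headI_cons, List.tail_cons, Finset.mem_sigma, Finset.mem_univ, true_and]
      exact (hHc a).mem_toFinset.2 (hH.mem_toFinset.1 hx.2)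
    · intro p hp
      rw [Finset.mem_sigma] at hp
      rw [Finset.mem_erase]
      exact ⟨List.cons_ne_nil _ _, hH.mem_toFinset.2 ((hHc p.1).mem_toFinset.1 hp.2)⟩
    · intro x hx
      rw [Finset.mem_erase] at hx
      obtain ⟨a, y, rfl⟩ := List.exists_cons_of_ne_nil hx.1
      simp
    · intro p hp
      rfl
    · intro x hx
      rw [Finset.mem_erase] at hx
      obtain ⟨a, y, rfl⟩ := List.exists_cons_of_ne_nil hx.1
      simp only [List.headI_cons, List.tail_cons]
      exact wcons a y
  have hfin : ∑ i : Fin s, ∑ y ∈ (hHc i).toFinset, (s:ℝ)⁻¹ * w y =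
      (s : ℝ)⁻¹ * ∑ i : Fin s, sWeight s (childSet s H i) := by
    rw [Finset.mul_sum]
    exact Finset.sum_congr rfl fun i _ => by rw [h2 i, Finset.mul_sum]
  rw [Finset.sum_sigma'] at hfin
  rw [hbij, hfin]

noncomputable def GH (s : ℕ) (H : Set (List (Fin s))) : ℝ :=
  ∑' σ : sSigs s H, aTerm s σ

lemma insert_shift_injective : Function.Injective (fun τ : Set ℕ => insert 0 (Nat.succ '' τ)) := by
  have hne : ∀ (τ : Set ℕ) (m : ℕ), m ∈ Nat.succ '' τ → m ≠ 0 := by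
    rintro τ m ⟨k, -, rfl⟩
    exact Nat.succ_ne_zero k
  intro τ τ' h
  simp only at h
  apply Set.image_injective.mpr Nat.succ_injective
  ext m
  constructor
  · intro hm
    have h2 : m ∈ insert 0 (Nat.succ '' τ') := h ▸ Set.mem_insert_iff.mpr (Or.inr hm)
    rcases Set.mem_insert_iff.mp h2 with h3 | h3
    · exact absurd h3 (hne τ m hm)
    · exact h3
  · intro hm
    have h2 : m ∈ insert 0 (Nat.succ '' τ) := h.symm ▸ Set.mem_insert_iff.mpr (Or.inr hm)
    rcases Set.mem_insert_iff.mp h2 with h3 | h3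
    · exact absurd h3 (hne τ' m hm)
    · exact h3

lemma main {s : ℕ} (hs : 2 ≤ s) :
    ∀ (n : ℕ) (H : Set (List (Fin s))), H ⊆ sTreeVerts s n →
      ((s : ℝ) / ((s : ℝ) - 1)) ^ sWeight s H ≤ GH s H := by
  have hs2 : (2:ℝ) ≤ (s:ℝ) := by exact_mod_cast hs
  have hs1' : (0:ℝ) < (s:ℝ) - 1 := by linarith
  have hs0 : (0:ℝ) < (s:ℝ) := by linarith
  have hsm1ne : ((s:ℝ) - 1) ≠ 0 := ne_of_gt hs1'
  have hsne : (s:ℝ) ≠ 0 := ne_of_gt hs0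
  have hr : (0:ℝ) < (s:ℝ)/((s:ℝ)-1) := by positivity
  intro n
  induction n with
  | zero =>
    intro H hH
    have hHe : H = ∅ := by
      ext x
      simp only [Set.mem_empty_iff_false, iff_false]
      intro hx
      exact absurd (hH hx) (by simp [sTreeVerts])
    subst hHe
    have hw : sWeight s (∅ : Set (List (Fin s))) = 0 := by
      rw [sWeight]
      exact tsum_empty
    rw [hw, Real.rpow_zero]
    have hfin := sSigs_finite (s := s) (n := 0) (H := (∅ : Set (List (Fin s))))
      (Set.empty_subset _)
    have hGH : GH s ∅ = ∑ σ ∈ hfin.toFinset, aTerm s σ := tsum_finite hfin _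
    rw [GH] at hGH
    rw [GH, hGH]
    have h0 : (∅ : Set ℕ) ∈ hfin.toFinset := hfin.mem_toFinset.2 (empty_mem_sSigs s _)
    calc (1:ℝ) = aTerm s (∅ : Set ℕ) := by simp [aTerm]
    _ ≤ _ := Finset.single_le_sum (fun σ _ => aTerm_nonneg hs σ) h0
  | succ n ih =>
    intro H hH
    classical
    have hHfin : H.Finite := (List.finite_length_lt (Fin s) (n+1)).subset hH
    set Hc : Fin s → Set (List (Fin s)) := childSet s H with hHcdef
    have hHcs : ∀ i, Hc i ⊆ sTreeVerts s n := childSet_subset hH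
    have hSfin : ∀ i, (sSigs s (Hc i)).Finite := fun i => sSigs_finite (hHcs i)
    set FS : Fin s → Finset (Set ℕ) := fun i => (hSfin i).toFinset with hFSdef
    have hFSH := sSigs_finite hH
    set FSH : Finset (Set ℕ) := hFSH.toFinset with hFSHdef
    have hGHeq : GH s H = ∑ σ ∈ FSH, aTerm s σ := tsum_finite hFSH _
    set g : Fin s → ℝ := fun i => GH s (Hc i) with hgdef
    have hg_eq : ∀ i, g i = ∑ σ ∈ FS i, aTerm s σ := fun i => tsum_finite (hSfin i) _
    have hIH : ∀ i, ((s:ℝ)/((s:ℝ)-1)) ^ sWeight s (Hc i) ≤ g i := fun i => ih (Hc i) (hHcs i)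
    have hgpos : ∀ i, 0 < g i := fun i =>
      lt_of_lt_of_le (Real.rpow_pos_of_pos hr _) (hIH i)
    set FU : Finset (Set ℕ) := Finset.univ.biUnion FS with hFUdef
    set FI : Finset (Set ℕ) := FU.filter (fun σ => ∀ i, σ ∈ FS i) with hFIdef
    set SG : ℝ := ∑ i : Fin s, g i with hSGdef
    set GI : ℝ := ∑ σ ∈ FI, aTerm s σ with hGIdef
    set X : ℝ := ∑ σ ∈ FU, aTerm s σ with hXdef
    have hFSsubFU : ∀ i, FS i ⊆ FU := fun i =>
      Finset.subset_biUnion_of_mem FS (Finset.mem_univ i)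
    have hFIsubFS : ∀ i, FI ⊆ FS i := by
      intro i σ hσ
      exact (Finset.mem_filter.mp hσ).2 i
    have hGI0 : 0 ≤ GI := Finset.sum_nonneg fun σ _ => aTerm_nonneg hs σ
    have hGIle : ∀ i, GI ≤ g i := by
      intro i
      rw [hg_eq i]
      exact Finset.sum_le_sum_of_subset_of_nonneg (hFIsubFS i)
        (fun σ _ _ => aTerm_nonneg hs σ)
    -- counting inequality
    have hcount : SG ≤ ((s:ℝ) - 1) * X + GI := by
      have h1 : ∀ i, g i = ∑ σ ∈ FU, (if σ ∈ FS i then aTerm s σ else 0) := by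
        intro i
        rw [Finset.sum_ite_mem, Finset.inter_eq_right.mpr (hFSsubFU i), hg_eq i]
      have h2 : SG = ∑ σ ∈ FU, ∑ i : Fin s, (if σ ∈ FS i then aTerm s σ else 0) := by
        rw [hSGdef, Finset.sum_comm]
        exact Finset.sum_congr rfl fun i _ => h1 i
      rw [h2]
      have h3 : ((s:ℝ) - 1) * X + GI =
          ∑ σ ∈ FU, (((s:ℝ) - 1) * aTerm s σ + (if σ ∈ FI then aTerm s σ else 0)) := by
        rw [Finset.sum_add_distrib, ← Finset.mul_sum, Finset.sum_ite_mem,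
          Finset.inter_eq_right.mpr (Finset.filter_subset _ _)]
      rw [h3]
      refine Finset.sum_le_sum fun σ hσ => ?_
      by_cases hall : ∀ i, σ ∈ FS i
      · have : ∀ i : Fin s, (if σ ∈ FS i then aTerm s σ else 0) = aTerm s σ :=
          fun i => if_pos (hall i)
        rw [Finset.sum_congr rfl fun i _ => this i, Finset.sum_const, Finset.card_univ,
          Fintype.card_fin, if_pos (Finset.mem_filter.mpr ⟨hσ, hall⟩), nsmul_eq_mul]
        ring_nf
        exact le_refl _
      · push_neg at hall
        obtain ⟨i0, hi0⟩ := hall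
        have hb : ∑ i : Fin s, (if σ ∈ FS i then aTerm s σ else 0) ≤
            ((s:ℝ) - 1) * aTerm s σ := by
          rw [← Finset.sum_erase_add _ _ (Finset.mem_univ i0), if_neg hi0, add_zero]
          calc ∑ i ∈ Finset.univ.erase i0, (if σ ∈ FS i then aTerm s σ else 0)
              ≤ ∑ i ∈ Finset.univ.erase i0, aTerm s σ :=
                Finset.sum_le_sum fun i _ => by
                  split
                  · exact le_refl _
                  · exact aTerm_nonneg hs σ
          _ = ((s:ℝ) - 1) * aTerm s σ := by
              rw [Finset.sum_const, Finset.card_erase_of_mem (Finset.mem_univ i0),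
                Finset.card_univ, Fintype.card_fin, nsmul_eq_mul]
              congr 1
              have : (1:ℕ) ≤ s := by omega
              push_cast [Nat.cast_sub this]
              ring
        refine hb.trans ?_
        have : (0:ℝ) ≤ (if σ ∈ FI then aTerm s σ else 0) := by
          split
          · exact aTerm_nonneg hs σ
          · exact le_refl _
        linarith
    -- the shifted union sits inside FSH
    have hA : FU.image (fun σ => Nat.succ '' σ) ⊆ FSH := by
      intro σ' hσ'
      obtain ⟨σ, hσ, rfl⟩ := Finset.mem_image.mp hσ'
      obtain ⟨i, -, hσi⟩ := Finset.mem_biUnion.mp hσ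
      exact hFSH.mem_toFinset.2 (shift_mem i ((hSfin i).mem_toFinset.1 hσi))
    have hXA : ∑ σ ∈ FU.image (fun σ => Nat.succ '' σ), aTerm s σ = X := by
      rw [Finset.sum_image (fun x _ y _ h => Set.image_injective.mpr Nat.succ_injective h)]
      exact Finset.sum_congr rfl fun σ _ => by
        rw [aTerm, aTerm, Set.ncard_image_of_injective _ Nat.succ_injective]
    -- AM-GM
    set P : ℝ := ∏ i : Fin s, g i ^ ((s:ℝ)⁻¹) with hPdef
    have hP0 : 0 < P := Finset.prod_pos fun i _ => Real.rpow_pos_of_pos (hgpos i) _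
    have hAMGM : (s:ℝ) * P ≤ SG := by
      have := Real.geom_mean_le_arith_mean_weighted Finset.univ (fun _ : Fin s => (s:ℝ)⁻¹) g
        (fun i _ => by positivity)
        (by rw [Finset.sum_const, Finset.card_univ, Fintype.card_fin, nsmul_eq_mul,
          mul_inv_cancel₀ hsne])
        (fun i _ => (hgpos i).le)
      have h2 : ∑ i : Fin s, (s:ℝ)⁻¹ * g i = (s:ℝ)⁻¹ * SG := by
        rw [hSGdef, Finset.mul_sum]
      rw [h2] at this
      calc (s:ℝ) * P ≤ (s:ℝ) * ((s:ℝ)⁻¹ * SG) := by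
            exact mul_le_mul_of_nonneg_left this hs0.le
      _ = SG := by field_simp
    have hGIP : GI ≤ P := by
      rcases eq_or_lt_of_le hGI0 with h0 | h0
      · rw [← h0]; exact hP0.le
      · have hGIeq : GI = ∏ _i : Fin s, GI ^ ((s:ℝ)⁻¹) := by
          rw [Finset.prod_const, Finset.card_univ, Fintype.card_fin,
            ← Real.rpow_natCast (GI ^ ((s:ℝ)⁻¹)) s, ← Real.rpow_mul h0.le,
            inv_mul_cancel₀ hsne, Real.rpow_one]
        rw [hGIeq]
        exact Finset.prod_le_prod (fun i _ => Real.rpow_nonneg h0.le _)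
          (fun i _ => Real.rpow_le_rpow h0.le (hGIle i) (by positivity))
    -- r ^ (inv s * sum of child weights) ≤ P
    have hWP : ((s:ℝ)/((s:ℝ)-1)) ^ ((s:ℝ)⁻¹ * ∑ i : Fin s, sWeight s (Hc i)) ≤ P := by
      have h1 : ((s:ℝ)/((s:ℝ)-1)) ^ ((s:ℝ)⁻¹ * ∑ i : Fin s, sWeight s (Hc i)) =
          ∏ i : Fin s, (((s:ℝ)/((s:ℝ)-1)) ^ sWeight s (Hc i)) ^ ((s:ℝ)⁻¹) := by
        rw [Finset.mul_sum, Real.rpow_sum_of_pos hr]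
        exact Finset.prod_congr rfl fun i _ => by
          rw [← Real.rpow_mul hr.le, mul_comm]
      rw [h1]
      exact Finset.prod_le_prod
        (fun i _ => Real.rpow_nonneg (Real.rpow_pos_of_pos hr _).le _)
        (fun i _ => Real.rpow_le_rpow (Real.rpow_pos_of_pos hr _).le (hIH i) (by positivity))
    rw [hGHeq]
    rw [sWeight_decomp (by omega) hHfin]
    by_cases hroot : [] ∈ H
    · -- root case
      rw [if_pos hroot]
      have hB : FI.image (fun τ => insert 0 (Nat.succ '' τ)) ⊆ FSH := by
        intro σ' hσ'
        obtain ⟨τ, hτ, rfl⟩ := Finset.mem_image.mp hσ'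
        refine hFSH.mem_toFinset.2 (combine_mem hs hroot fun i => ?_)
        exact (hSfin i).mem_toFinset.1 (hFIsubFS i hτ)
      have hXB : ∑ σ ∈ FI.image (fun τ => insert 0 (Nat.succ '' τ)), aTerm s σ =
          ((s:ℝ) - 1)⁻¹ * GI := by
        rw [Finset.sum_image (fun x _ y _ h => insert_shift_injective h), hGIdef,
          Finset.mul_sum]
        refine Finset.sum_congr rfl fun τ hτ => ?_
        have hτfin : τ.Finite := by
          have := sSigs_subset (hHcs ⟨0, by omega⟩)
            ((hSfin ⟨0, by omega⟩).mem_toFinset.1 (hFIsubFS ⟨0, by omega⟩ hτ))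
          exact this.2
        have h0n : (0:ℕ) ∉ Nat.succ '' τ := by
          rintro ⟨k, -, hk⟩
          exact Nat.succ_ne_zero k hk
        rw [aTerm, aTerm, Set.ncard_insert_of_notMem h0n (hτfin.image _),
          Set.ncard_image_of_injective _ Nat.succ_injective]
        rw [show (-(((τ.ncard) + 1 : ℕ) : ℤ)) = (-1) + (-(τ.ncard : ℤ)) by push_cast; ring,
          zpow_add₀ hsm1ne, zpow_neg_one]
      have hdisj : Disjoint (FU.image (fun σ => Nat.succ '' σ))
          (FI.image (fun τ => insert 0 (Nat.succ '' τ))) := by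
        rw [Finset.disjoint_left]
        rintro σ' hσ'A hσ'B
        obtain ⟨σ, -, rfl⟩ := Finset.mem_image.mp hσ'A
        obtain ⟨τ, -, hτ⟩ := Finset.mem_image.mp hσ'B
        have h0 : (0:ℕ) ∈ Nat.succ '' σ := by
          rw [← hτ]
          exact Set.mem_insert _ _
        obtain ⟨k, -, hk⟩ := h0
        exact Nat.succ_ne_zero k hk
      have hsum : X + ((s:ℝ) - 1)⁻¹ * GI ≤ ∑ σ ∈ FSH, aTerm s σ := by
        calc X + ((s:ℝ) - 1)⁻¹ * GI =
            ∑ σ ∈ FU.image (fun σ => Nat.succ '' σ) ∪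
              FI.image (fun τ => insert 0 (Nat.succ '' τ)), aTerm s σ := by
              rw [Finset.sum_union hdisj, hXA, hXB]
        _ ≤ ∑ σ ∈ FSH, aTerm s σ :=
            Finset.sum_le_sum_of_subset_of_nonneg (Finset.union_subset hA hB)
              (fun σ _ _ => aTerm_nonneg hs σ)
      refine le_trans ?_ hsum
      have hrw : ((s:ℝ)/((s:ℝ)-1)) ^
          ((1:ℝ) + (s:ℝ)⁻¹ * ∑ i : Fin s, sWeight s (Hc i)) =
          ((s:ℝ)/((s:ℝ)-1)) *
            ((s:ℝ)/((s:ℝ)-1)) ^ ((s:ℝ)⁻¹ * ∑ i : Fin s, sWeight s (Hc i)) := by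
        rw [Real.rpow_add hr, Real.rpow_one]
      rw [hrw]
      have hfinal : ((s:ℝ)/((s:ℝ)-1)) * P ≤ X + ((s:ℝ) - 1)⁻¹ * GI := by
        rw [div_mul_eq_mul_div, div_le_iff₀ hs1']
        calc (s:ℝ) * P ≤ SG := hAMGM
        _ ≤ ((s:ℝ) - 1) * X + GI := hcount
        _ = (X + ((s:ℝ) - 1)⁻¹ * GI) * ((s:ℝ) - 1) := by
            field_simp
      refine le_trans ?_ hfinal
      exact mul_le_mul_of_nonneg_left hWP hr.le
    · -- rootless case
      rw [if_neg hroot]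
      have hsum : X ≤ ∑ σ ∈ FSH, aTerm s σ := by
        rw [← hXA]
        exact Finset.sum_le_sum_of_subset_of_nonneg hA (fun σ _ _ => aTerm_nonneg hs σ)
      refine le_trans ?_ hsum
      have hPX : P ≤ X := by
        have h1 : ((s:ℝ) - 1) * P ≤ ((s:ℝ) - 1) * X := by
          calc ((s:ℝ) - 1) * P = (s:ℝ) * P - P := by ring
          _ ≤ SG - GI := by
              have := hGIP
              linarith [hAMGM]
          _ ≤ ((s:ℝ) - 1) * X := by linarith [hcount]
        exact le_of_mul_le_mul_left h1 hs1'
      refine le_trans ?_ hPX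
      rw [zero_add]
      exact hWP

end Stmt10Aux

/-- `s`-ary signature-counting lemma:
`|S(H)| ≥ Σ_{σ ∈ S(H)} (s-1)^(-|σ|) ≥ (s/(s-1))^(w(H))`. -/
theorem stmt10 (s n : ℕ) (hs : 2 ≤ s)
    (H : Set (List (Fin s))) (hH : H ⊆ sTreeVerts s n) :
    (∑' σ : sSigs s H, ((s : ℝ) - 1) ^ (-((σ : Set ℕ).ncard : ℤ)) ≤
        ((sSigs s H).ncard : ℝ)) ∧
    ((s : ℝ) / ((s : ℝ) - 1)) ^ sWeight s H ≤
        ∑' σ : sSigs s H, ((s : ℝ) - 1) ^ (-((σ : Set ℕ).ncard : ℤ)) := by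
  have hfin := Stmt10Aux.sSigs_finite hH
  constructor
  · rw [Stmt10Aux.tsum_finite hfin (fun σ => ((s : ℝ) - 1) ^ (-(σ.ncard : ℤ)))]
    rw [Set.ncard_eq_toFinset_card _ hfin]
    calc ∑ σ ∈ hfin.toFinset, ((s : ℝ) - 1) ^ (-(σ.ncard : ℤ))
        ≤ ∑ _σ ∈ hfin.toFinset, (1:ℝ) :=
          Finset.sum_le_sum fun σ _ => Stmt10Aux.aTerm_le_one hs σ
    _ = (hfin.toFinset.card : ℝ) := by rw [Finset.sum_const, nsmul_eq_mul, mul_one]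
  · exact Stmt10Aux.main hs n H hH
end
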